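/- arXiv:math/0603543 — 11 statements merged into one kernel-verified Lean document; each statement's English description precedes it below -/
import Mathlib

section
/- Let (X, μ) be a measure space, let N be a positive integer, and let φ₁,…,φ_N, ψ₁,…,ψ_N : X → ℝ be measurable functions such that φ_j·ψ_k is μ-integrable for all j,k and such that the function (x₁,…,x_N) ↦ det(φ_j(x_k))_{1≤j,k≤N} · det(ψ_j(x_k))_{1≤j,k≤N} is integrable with respect to the N-fold product measure μ^⊗N. Then ∫_{X^N} det(φ_j(x_k))_{1≤j,k≤N} · det(ψ_j(x_k))_{1≤j,k≤N} dμ(x₁)⋯dμ(x_N) = N! · det( ∫_X φ_j(x) ψ_k(x) dμ(x) )_{1≤j,k≤N}. -/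
/-!
Expanding both determinants turns the integrand into a double sum over permutations `σ, τ` of
products `∏ k, φ (σ k) (x k) * ψ (τ k) (x k)`, each of which factorises over the coordinates by
Fubini, giving `∏ k, A (σ k) (τ k)` for the Gram matrix `A j k = ∫ φ j * ψ k`. For fixed `σ`, the
sum over `τ` is the determinant of `A` with rows permuted by `σ`, which the sign of `σ` cancels;
so each of the `N!` values of `σ` contributes `det A`.
-/

open MeasureTheory Equiv

namespace Matrix

variable {n R : Type*} [Fintype n] [DecidableEq n] [CommRing R]

theorem det_mul_det_eq_sum_sum_perm (A B : Matrix n n R) :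
    A.det * B.det = ∑ σ : Perm n, ∑ τ : Perm n,
      ((Perm.sign σ : ℤ) : R) * (Perm.sign τ : ℤ) * ∏ k, A (σ k) k * B (τ k) k := by
  rw [det_apply', det_apply', Finset.sum_mul_sum]
  refine Finset.sum_congr rfl fun σ _ => Finset.sum_congr rfl fun τ _ => ?_
  rw [Finset.prod_mul_distrib]
  ring

theorem sum_perm_sign_mul_sign_mul_prod_eq_det (A : Matrix n n R) (σ : Perm n) :
    ∑ τ : Perm n, ((Perm.sign σ : ℤ) : R) * (Perm.sign τ : ℤ) * ∏ k, A (σ k) (τ k) = A.det := by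
  have hrows : ∑ τ : Perm n, ((Perm.sign τ : ℤ) : R) * ∏ k, A (σ k) (τ k)
      = (Perm.sign σ : ℤ) * A.det := by
    rw [← det_permute, ← det_transpose, det_apply']
    rfl
  simp_rw [mul_assoc, ← Finset.mul_sum, hrows, ← mul_assoc, ← Int.cast_mul,
    Int.units_coe_mul_self, Int.cast_one, one_mul]

theorem sum_sum_perm_sign_mul_prod_eq_factorial_mul_det (A : Matrix n n R) :
    ∑ σ : Perm n, ∑ τ : Perm n, ((Perm.sign σ : ℤ) : R) * (Perm.sign τ : ℤ) * ∏ k, A (σ k) (τ k)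
      = (Fintype.card n).factorial * A.det := by
  simp_rw [sum_perm_sign_mul_sign_mul_prod_eq_det, Finset.sum_const, Finset.card_univ,
    Fintype.card_perm, nsmul_eq_mul]

end Matrix

theorem integral_det_mul_det_eq_factorial_mul_det {ι X 𝕜 : Type*} [Fintype ι] [DecidableEq ι]
    [RCLike 𝕜] [MeasurableSpace X] (μ : Measure X) [SigmaFinite μ] (φ ψ : ι → X → 𝕜)
    (hint : ∀ j k, Integrable (fun x => φ j x * ψ k x) μ) :
    ∫ x : ι → X, (Matrix.of fun j k => φ j (x k)).det * (Matrix.of fun j k => ψ j (x k)).det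
        ∂(Measure.pi fun _ => μ)
      = (Fintype.card ι).factorial * (Matrix.of fun j k => ∫ x, φ j x * ψ k x ∂μ).det := by
  have hterm (σ τ : Perm ι) : Integrable (fun x : ι → X =>
      ((Perm.sign σ : ℤ) : 𝕜) * (Perm.sign τ : ℤ) * ∏ k, φ (σ k) (x k) * ψ (τ k) (x k))
      (Measure.pi fun _ => μ) :=
    (Integrable.fintype_prod fun k => hint (σ k) (τ k)).const_mul _
  simp_rw [Matrix.det_mul_det_eq_sum_sum_perm, Matrix.of_apply]
  rw [integral_finsetSum _ fun σ _ => integrable_finsetSum _ fun τ _ => hterm σ τ,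
    ← Matrix.sum_sum_perm_sign_mul_prod_eq_factorial_mul_det]
  refine Finset.sum_congr rfl fun σ _ => ?_
  rw [integral_finsetSum _ fun τ _ => hterm σ τ]
  refine Finset.sum_congr rfl fun τ _ => ?_
  rw [integral_const_mul,
    integral_fintype_prod_eq_prod (fun k y => φ (σ k) y * ψ (τ k) y)]
  simp only [Matrix.of_apply]

theorem andreief_identity_general {X : Type*} [MeasurableSpace X] (μ : Measure X) [SigmaFinite μ]
    (N : ℕ) (φ ψ : Fin N → X → ℝ)
    (hint : ∀ j k, Integrable (fun x => φ j x * ψ k x) μ) :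
    ∫ x : Fin N → X,
        (Matrix.of fun j k : Fin N => φ j (x k)).det *
        (Matrix.of fun j k : Fin N => ψ j (x k)).det ∂(Measure.pi fun _ => μ)
      = (N.factorial : ℝ) *
        (Matrix.of fun j k : Fin N => ∫ x, φ j x * ψ k x ∂μ).det := by
  simpa only [Fintype.card_fin] using integral_det_mul_det_eq_factorial_mul_det μ φ ψ hint

/-- The Andréief / de Bruijn integral identity. -/
theorem andreief_identity {X : Type*} [MeasurableSpace X] (μ : Measure X) [SigmaFinite μ]
    (N : ℕ) (hN : 0 < N) (φ ψ : Fin N → X → ℝ)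
    (hφ : ∀ j, Measurable (φ j)) (hψ : ∀ j, Measurable (ψ j))
    (hint : ∀ j k, Integrable (fun x => φ j x * ψ k x) μ)
    (hdet : Integrable
      (fun x : Fin N → X =>
        (Matrix.of fun j k : Fin N => φ j (x k)).det *
        (Matrix.of fun j k : Fin N => ψ j (x k)).det)
      (Measure.pi fun _ => μ)) :
    ∫ x : Fin N → X,
        (Matrix.of fun j k : Fin N => φ j (x k)).det *
        (Matrix.of fun j k : Fin N => ψ j (x k)).det ∂(Measure.pi fun _ => μ)
      = (N.factorial : ℝ) *
        (Matrix.of fun j k : Fin N => ∫ x, φ j x * ψ k x ∂μ).det :=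
  andreief_identity_general μ N φ ψ hint
end

section
/- Let N be a positive integer and x₁,…,x_N elements of a commutative ring. Consider the 2N×2N matrix M whose rows are indexed by j = 0,…,2N−1 and whose columns come in consecutive pairs indexed by k = 1,…,N, the two entries of the k-th pair in row j being x_k^j and j·x_k^{j−1} (where the entry j·x_k^{j−1} is interpreted as 0 when j = 0). Then det M = ∏_{1≤j<k≤N} (x_j − x_k)^4. -/
/-!
Perturb the second node of each pair: with 2N distinct nodes `t (i, k)`, subtracting the first
column of each pair from the second and dividing by `t (1, k) - t (0, k)` turns the Vandermonde
matrix into one whose second columns are divided differences of `x ↦ x ^ j`. Over indeterminates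
these N factors can be cancelled from the Vandermonde product, so the divided-difference
determinant is the product of the differences of nodes in different pairs, in every commutative
ring. Letting the two nodes of each pair coincide turns the divided differences into
`j * x ^ (j - 1)`, and each pair of pairs contributes four equal factors.
-/

open Matrix Finset

namespace ConfluentVandermonde

def pairEquiv (N : ℕ) : Fin 2 × Fin N ≃ Fin (2 * N) where
  toFun p := ⟨p.1 + 2 * p.2, by omega⟩
  invFun c := (⟨c % 2, by omega⟩, ⟨c / 2, by omega⟩)
  left_inv p := by ext <;> simp <;> omega
  right_inv c := by ext; simp; omega

theorem pairEquiv_lt_pairEquiv_iff {N : ℕ} {q q' : Fin 2 × Fin N} :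
    pairEquiv N q < pairEquiv N q' ↔ q.2 < q'.2 ∨ q.2 = q'.2 ∧ q.1 < q'.1 := by
  simp only [pairEquiv, Equiv.coe_fn_mk, Fin.lt_def, Fin.ext_iff]
  omega

section Products

variable {M κ ι : Type*} [CommMonoid M] [Fintype κ] [Fintype ι]

theorem prod_prod_ite_snd_lt [LinearOrder ι] (g : κ × ι → κ × ι → M) :
    ∏ q, ∏ q', (if q.2 < q'.2 then g q q' else 1)
      = ∏ p ∈ univ.filter (fun p : ι × ι => p.1 < p.2),
          ∏ i, ∏ i', g (i, p.1) (i', p.2) := by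
  simp only [prod_filter, Fintype.prod_prod_type, ite_prod_one]
  rw [prod_comm]
  exact prod_congr rfl fun k _ => (prod_congr rfl fun i _ => prod_comm).trans prod_comm

theorem prod_prod_ite_snd_eq_and_fst_lt [DecidableEq ι] (g : Fin 2 × ι → Fin 2 × ι → M) :
    ∏ q, ∏ q', (if q.2 = q'.2 ∧ q.1 < q'.1 then g q q' else 1) = ∏ k, g (0, k) (1, k) := by
  simp [Fintype.prod_prod_type, ite_and, Fin.prod_univ_two]

theorem prod_Ioi_pairEquiv {N : ℕ} (g : Fin 2 × Fin N → Fin 2 × Fin N → M) :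
    ∏ a : Fin (2 * N), ∏ b ∈ Ioi a, g ((pairEquiv N).symm a) ((pairEquiv N).symm b)
      = (∏ k, g (0, k) (1, k)) *
          ∏ p ∈ univ.filter (fun p : Fin N × Fin N => p.1 < p.2),
            ∏ i, ∏ i', g (i, p.1) (i', p.2) := by
  have ite_lt_eq_mul (q q' : Fin 2 × Fin N) :
      (if pairEquiv N q < pairEquiv N q' then g q q' else 1)
        = (if q.2 < q'.2 then g q q' else 1) *
          (if q.2 = q'.2 ∧ q.1 < q'.1 then g q q' else 1) := by
    simp only [pairEquiv_lt_pairEquiv_iff]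
    split_ifs <;> simp_all
  simp only [← filter_lt_eq_Ioi, prod_filter]
  rw [← (pairEquiv N).prod_comp]
  simp_rw [← (pairEquiv N).prod_comp, Equiv.symm_apply_apply, ite_lt_eq_mul, prod_mul_distrib,
    prod_prod_ite_snd_lt, prod_prod_ite_snd_eq_and_fst_lt, mul_comm, prod_filter]

end Products

variable {R : Type*} [CommRing R]

/-- Column `(1, k)` holds the divided difference
`(t (1, k) ^ j - t (0, k) ^ j) / (t (1, k) - t (0, k))`, written without division. -/
def divDiffMatrix {m : ℕ} {ι : Type*} (t : Fin 2 × ι → R) : Matrix (Fin m) (Fin 2 × ι) R :=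
  of fun j p => if p.1 = 0 then t p ^ (j : ℕ)
    else ∑ r ∈ range j, t p ^ r * t (0, p.2) ^ ((j : ℕ) - 1 - r)

theorem divDiffMatrix_map {S : Type*} [CommRing S] {m : ℕ} {ι : Type*} (f : R →+* S)
    (t : Fin 2 × ι → R) : (divDiffMatrix (m := m) t).map f = divDiffMatrix (f ∘ t) := by
  ext j p
  simp [divDiffMatrix, apply_ite f]

theorem pow_eq_divDiffMatrix_mul_blockDiagonal {m : ℕ} {ι : Type*} [Fintype ι] [DecidableEq ι]
    (t : Fin 2 × ι → R) :
    (of fun (j : Fin m) p => t p ^ (j : ℕ))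
      = divDiffMatrix t * blockDiagonal fun k => !![1, 1; 0, t (1, k) - t (0, k)] := by
  ext j ⟨i, k⟩
  simp only [mul_apply, Fintype.sum_prod_type, blockDiagonal_apply', Fin.sum_univ_two]
  fin_cases i <;> simp [divDiffMatrix, geom_sum₂_mul]

variable {N : ℕ}

theorem det_divDiffMatrix_mul_prod (t : Fin 2 × Fin N → R) :
    ((divDiffMatrix t).submatrix id (pairEquiv N).symm).det * ∏ k, (t (1, k) - t (0, k))
      = (∏ k, (t (1, k) - t (0, k))) *
          ∏ p ∈ univ.filter (fun p : Fin N × Fin N => p.1 < p.2),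
            ∏ i, ∏ i', (t (i', p.2) - t (i, p.1)) := by
  calc _ = (vandermonde (t ∘ (pairEquiv N).symm)).det := by
        have : (vandermonde (t ∘ (pairEquiv N).symm))ᵀ
            = (of fun (j : Fin (2 * N)) p => t p ^ (j : ℕ)).submatrix id (pairEquiv N).symm := rfl
        rw [← det_transpose (vandermonde _), this, pow_eq_divDiffMatrix_mul_blockDiagonal,
          submatrix_mul _ _ _ (pairEquiv N).symm _ (pairEquiv N).symm.bijective, det_mul,
          det_submatrix_equiv_self, det_blockDiagonal]
        simp
    _ = _ := by
        rw [det_vandermonde]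
        exact prod_Ioi_pairEquiv fun q q' => t q' - t q

theorem det_divDiffMatrix (t : Fin 2 × Fin N → R) :
    ((divDiffMatrix t).submatrix id (pairEquiv N).symm).det
      = ∏ p ∈ univ.filter (fun p : Fin N × Fin N => p.1 < p.2),
          ∏ i, ∏ i', (t (i', p.2) - t (i, p.1)) := by
  let T : Fin 2 × Fin N → MvPolynomial (Fin 2 × Fin N) ℤ := MvPolynomial.X
  have hT : ∏ k, (T (1, k) - T (0, k)) ≠ 0 :=
    prod_ne_zero_iff.mpr fun k _ => sub_ne_zero.mpr (MvPolynomial.X_injective.ne (by simp))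
  have universal := mul_right_cancel₀ hT ((det_divDiffMatrix_mul_prod T).trans (mul_comm _ _))
  let f := MvPolynomial.eval₂Hom (Int.castRingHom R) t
  have hfT (p) : f (T p) = t p := MvPolynomial.eval₂Hom_X' _ _ _
  simpa [RingHom.map_det, RingHom.mapMatrix_apply, ← submatrix_map, divDiffMatrix_map,
    Function.comp_def, hfT, map_prod] using congrArg f universal

end ConfluentVandermonde

open ConfluentVandermonde in
/-- The confluent Vandermonde determinant identity: the determinant of the `2N × 2N`
matrix whose columns come in pairs `(x_k^j, j·x_k^{j-1})` (rows indexed by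
`j = 0, …, 2N-1`) equals the fourth power of the Vandermonde product. -/
theorem confluent_vandermonde {R : Type*} [CommRing R] (N : ℕ) (x : Fin N → R) :
    (Matrix.of fun j c : Fin (2 * N) =>
        if c.val % 2 = 0 then
          x ⟨c.val / 2, by have := c.isLt; omega⟩ ^ (j : ℕ)
        else
          ((j : ℕ) : R) * x ⟨c.val / 2, by have := c.isLt; omega⟩ ^ ((j : ℕ) - 1)).det
      = ∏ p ∈ Finset.univ.filter (fun p : Fin N × Fin N => p.1 < p.2),
          (x p.1 - x p.2) ^ 4 := by
  calc _ = ((divDiffMatrix fun p : Fin 2 × Fin N => x p.2).submatrix id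
              (pairEquiv N).symm).det := by
        congr 1
        ext j c
        simp only [of_apply, submatrix_apply, id, divDiffMatrix, pairEquiv, Equiv.coe_fn_symm_mk]
        simp [Fin.ext_iff, geom_sum₂_self]
    _ = _ := by
        rw [det_divDiffMatrix]
        refine prod_congr rfl fun p _ => ?_
        simp only [prod_const, card_univ, Fintype.card_fin]
        ring
end

section
/- Let N be a positive integer and let μ be a Borel measure on ℝ such that ∫_ℝ |x|^i dμ(x) < ∞ for all 0 ≤ i ≤ 2N−2. Let m_i = ∫_ℝ x^i dμ(x) denote the i-th moment of μ. Then ∫_{ℝ^N} ∏_{1≤j<k≤N} (x_j − x_k)² dμ(x₁)⋯dμ(x_N) = N! · det( m_{j+k} )_{0≤j,k≤N−1}. -/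
/-!
The squared Vandermonde product is `det V * det V` with `V j i = x i ^ j`, so the identity is the
case `f j = g j = (· ^ j)` of Andréief's identity
`∫ det (f j (x i)) * det (g j (x i)) = N! * det (∫ f j * g k)`.
To prove the latter, expand both determinants over permutations `σ, τ`: the integrand becomes a
signed sum of products of one-variable functions, so by Fubini the integral is
`∑ σ τ, sign σ * sign τ * ∏ i, M (σ i) (τ i)` with `M j k = ∫ f j * g k`. For fixed `σ` the inner
sum is `det` of `M` with rows permuted by `σ`, i.e. `sign σ * det M`; the signs cancel and the
`N!` choices of `σ` give the factor `N!`.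
-/

open MeasureTheory Matrix Equiv
open scoped Nat

namespace Matrix

variable {n R : Type*} [Fintype n] [DecidableEq n] [CommRing R]

theorem det_submatrix_eq_sum_perm (M : Matrix n n R) (σ : Perm n) :
    (M.submatrix σ id).det = ∑ τ : Perm n, (Perm.sign τ : R) * ∏ i, M (σ i) (τ i) := by
  rw [← det_transpose, det_apply']
  rfl

theorem sum_perm_sum_perm_sign_mul_prod_eq (M : Matrix n n R) :
    ∑ σ : Perm n, ∑ τ : Perm n, (Perm.sign σ : R) * Perm.sign τ * ∏ i, M (σ i) (τ i)
      = (Fintype.card n)! * M.det := by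
  have inner (σ : Perm n) :
      ∑ τ : Perm n, (Perm.sign σ : R) * Perm.sign τ * ∏ i, M (σ i) (τ i) = M.det := by
    simp_rw [mul_assoc, ← Finset.mul_sum, ← det_submatrix_eq_sum_perm, det_permute, ← mul_assoc,
      ← Int.cast_mul, ← Units.val_mul, Int.units_mul_self, Units.val_one, Int.cast_one, one_mul]
  simp [inner, Fintype.card_perm]

theorem det_mul_det_eq_sum_perm_sum_perm (A B : Matrix n n R) :
    A.det * B.det = ∑ σ : Perm n, ∑ τ : Perm n,
      (Perm.sign σ : R) * Perm.sign τ * ∏ i, A (σ i) i * B (τ i) i := by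
  rw [det_apply', det_apply', Finset.sum_mul_sum]
  refine Finset.sum_congr rfl fun σ _ => Finset.sum_congr rfl fun τ _ => ?_
  rw [Finset.prod_mul_distrib]
  ring

theorem det_vandermonde_sq {N : ℕ} (v : Fin N → R) :
    (vandermonde v).det ^ 2
      = ∏ p ∈ Finset.univ.filter (fun p : Fin N × Fin N => p.1 < p.2), (v p.1 - v p.2) ^ 2 := by
  simp_rw [det_vandermonde, ← Finset.prod_pow]
  rw [Finset.prod_sigma']
  refine Finset.prod_nbij' (fun p => (p.1, p.2)) (fun p => ⟨p.1, p.2⟩) ?_ ?_ ?_ ?_ ?_ <;>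
    simp [sub_sq_comm]

end Matrix

theorem integral_det_mul_det_eq {ι α 𝕜 : Type*} [Fintype ι] [DecidableEq ι] [RCLike 𝕜]
    [MeasurableSpace α] (μ : Measure α) [SigmaFinite μ] (f g : ι → α → 𝕜)
    (hfg : ∀ j k, Integrable (fun x => f j x * g k x) μ) :
    ∫ x : ι → α, (of fun j i => f j (x i)).det * (of fun j i => g j (x i)).det
        ∂(Measure.pi fun _ => μ)
      = (Fintype.card ι)! * (of fun j k => ∫ x, f j x * g k x ∂μ).det := by
  have term_integrable (σ τ : Perm ι) :
      Integrable (fun x : ι → α => ∏ i, f (σ i) (x i) * g (τ i) (x i))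
        (Measure.pi fun _ => μ) :=
    Integrable.fintype_prod fun i => hfg (σ i) (τ i)
  simp_rw [det_mul_det_eq_sum_perm_sum_perm, of_apply]
  rw [← sum_perm_sum_perm_sign_mul_prod_eq, integral_finsetSum _ fun σ _ =>
    integrable_finsetSum _ fun τ _ => (term_integrable σ τ).const_mul _]
  refine Finset.sum_congr rfl fun σ _ => ?_
  rw [integral_finsetSum _ fun τ _ => (term_integrable σ τ).const_mul _]
  refine Finset.sum_congr rfl fun τ _ => ?_
  rw [integral_const_mul, integral_fintype_prod_eq_prod (fun i x => f (σ i) x * g (τ i) x)]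
  simp

theorem heine_identity_general (N : ℕ) (μ : Measure ℝ) [SigmaFinite μ]
    (hmom : ∀ i ≤ 2 * N - 2, Integrable (fun x : ℝ => |x| ^ i) μ) :
    ∫ x : Fin N → ℝ,
        (∏ p ∈ Finset.univ.filter (fun p : Fin N × Fin N => p.1 < p.2),
          (x p.1 - x p.2) ^ 2) ∂(Measure.pi fun _ => μ)
      = (N.factorial : ℝ) *
        (Matrix.of fun j k : Fin N => ∫ t : ℝ, t ^ ((j : ℕ) + (k : ℕ)) ∂μ).det := by
  have monomial_integrable (j k : Fin N) :
      Integrable (fun t : ℝ => t ^ (j : ℕ) * t ^ (k : ℕ)) μ := by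
    have hjk : (j : ℕ) + k ≤ 2 * N - 2 := by omega
    simp_rw [← pow_add]
    exact (integrable_norm_iff (by fun_prop)).mp (by simpa [abs_pow] using hmom _ hjk)
  have andreief := integral_det_mul_det_eq μ _ _ monomial_integrable
  simp_rw [← pow_add, Fintype.card_fin] at andreief
  simp_rw [← det_vandermonde_sq, sq, ← det_transpose (vandermonde _)]
  exact andreief

/-- The Heine identity: the integral of the squared Vandermonde product against a product
measure equals `N!` times the determinant of the Hankel matrix of moments. -/
theorem heine_identity (N : ℕ) (hN : 0 < N) (μ : Measure ℝ) [SigmaFinite μ]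
    (hmom : ∀ i ≤ 2 * N - 2, Integrable (fun x : ℝ => |x| ^ i) μ) :
    ∫ x : Fin N → ℝ,
        (∏ p ∈ Finset.univ.filter (fun p : Fin N × Fin N => p.1 < p.2),
          (x p.1 - x p.2) ^ 2) ∂(Measure.pi fun _ => μ)
      = (N.factorial : ℝ) *
        (Matrix.of fun j k : Fin N => ∫ t : ℝ, t ^ ((j : ℕ) + (k : ℕ)) ∂μ).det :=
  heine_identity_general N μ hmom
end

section
/- Let N be a positive integer, let J ⊆ ℝ be a Borel measurable set with indicator function χ_J, and let P : ℝ^N → ℝ be a Lebesgue-integrable function that is symmetric, i.e. invariant under every permutation of its N arguments. Define G : ℝ → ℝ by G(λ) = ∫_{ℝ^N} ∏_{i=1}^N (1 − λ·χ_J(x_i)) · P(x₁,…,x_N) dx₁⋯dx_N, and for 0 ≤ m ≤ N define E(m) = binom(N,m) · ∫_{ℝ^N} ∏_{i=1}^m χ_J(x_i) · ∏_{i=m+1}^N (1 − χ_J(x_i)) · P(x₁,…,x_N) dx₁⋯dx_N. Then for every 0 ≤ m ≤ N, E(m) = ((−1)^m / m!) · (d^m G/dλ^m)(1), where (d^m G/dλ^m)(1)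 denotes the m-th derivative of G evaluated at λ = 1. -/
open MeasureTheory

open Polynomial in
private lemma polyEval_iteratedDeriv_aux (m : ℕ) (p : ℝ[X]) :
    iteratedDeriv m (fun x => p.eval x) = fun x => (derivative^[m] p).eval x := by
  induction m generalizing p with
  | zero => simp
  | succ k ih =>
    rw [iteratedDeriv_succ']
    have h : deriv (fun x => p.eval x) = fun x => (derivative p).eval x := by
      funext x; exact Polynomial.deriv (p := p)
    rw [h, ih, Function.iterate_succ_apply]

open Polynomial in
private lemma iter_derivative_sum_aux (m : ℕ) (s : Finset ℕ) (f : ℕ → ℝ[X]) :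
    derivative^[m] (∑ k ∈ s, f k) = ∑ k ∈ s, derivative^[m] (f k) := by
  induction m with
  | zero => simp
  | succ j ih =>
    rw [Function.iterate_succ_apply', ih, derivative_sum]
    simp [Function.iterate_succ_apply']

open Polynomial in
private lemma eval_iter_one_sub_aux (k m : ℕ) :
    (derivative^[m] ((1 - X : ℝ[X]) ^ k)).eval 1
      = if k = m then (-1 : ℝ) ^ m * m.factorial else 0 := by
  have h0 : (1 - X : ℝ[X]) = C (-1) * (X - C 1) := by
    rw [C_neg, C_1]; ring
  rw [h0, mul_pow, ← C_pow, iterate_derivative_C_mul, iterate_derivative_X_sub_pow,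
    eval_mul, eval_C, nsmul_eq_mul, eval_mul, eval_natCast, eval_pow, eval_sub, eval_X, eval_C,
    sub_self]
  rcases lt_trichotomy k m with h | h | h
  · rw [if_neg h.ne]
    rw [Nat.descFactorial_eq_zero_iff_lt.mpr h]
    simp
  · subst h
    simp [Nat.descFactorial_self]
  · rw [if_neg h.ne']
    rw [zero_pow (by omega : k - m ≠ 0)]
    simp

/-- `G_{β,N}(t,λ)` is a generating function for the probabilities `E_{β,N}(t,m)` that
exactly `m` of the coordinates lie in `J`:
`E(m) = ((-1)^m / m!) · (d^m G / dλ^m)(1)`. -/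
theorem generating_function_for_E (N : ℕ) (hN : 0 < N) (J : Set ℝ) (hJ : MeasurableSet J)
    (P : (Fin N → ℝ) → ℝ) (hP : Integrable P)
    (hsym : ∀ (σ : Equiv.Perm (Fin N)) (x : Fin N → ℝ), P (x ∘ σ) = P x)
    (G : ℝ → ℝ)
    (hG : ∀ lam : ℝ,
      G lam = ∫ x : Fin N → ℝ, (∏ i, (1 - lam * J.indicator 1 (x i))) * P x)
    (E : ℕ → ℝ)
    (hE : ∀ m : ℕ, E m = (N.choose m : ℝ) *
      ∫ x : Fin N → ℝ,
        (∏ i ∈ Finset.univ.filter (fun i : Fin N => (i : ℕ) < m), J.indicator 1 (x i)) *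
        (∏ i ∈ Finset.univ.filter (fun i : Fin N => m ≤ (i : ℕ)),
          (1 - J.indicator 1 (x i))) * P x) :
    ∀ m ≤ N, E m = ((-1) ^ m / (m.factorial : ℝ)) * iteratedDeriv m G 1 := by
  classical
  intro m hm
  -- the counting function
  set n : (Fin N → ℝ) → ℕ := fun x => (Finset.univ.filter fun i => x i ∈ J).card with hn
  have hmeasn : Measurable n := by
    have h1 : n = fun x => ∑ i : Fin N, J.indicator (fun _ => (1 : ℕ)) (x i) := by
      funext x
      show (Finset.filter (fun i => x i ∈ J) Finset.univ).card = _
      rw [Finset.card_filter]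
      refine Finset.sum_congr rfl fun i _ => ?_
      by_cases h : x i ∈ J <;> simp [h]
    rw [h1]
    exact Finset.measurable_sum _ fun i _ =>
      (measurable_const.indicator hJ).comp (measurable_pi_apply i)
  have hnle : ∀ x, n x ≤ N := fun x =>
    le_trans (Finset.card_filter_le _ _) (by simp)
  have hAk : ∀ k : ℕ, MeasurableSet {x : Fin N → ℝ | n x = k} := fun k =>
    hmeasn (measurableSet_singleton k)
  set a : ℕ → ℝ := fun k => ∫ x : Fin N → ℝ, ({x : Fin N → ℝ | n x = k}).indicator P x with ha
  -- Step 1: the product collapses to `(1-lam)^(n x)`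
  have hprod : ∀ (lam : ℝ) (x : Fin N → ℝ),
      (∏ i, (1 - lam * J.indicator 1 (x i))) = (1 - lam) ^ n x := by
    intro lam x
    have h1 : ∀ i : Fin N, (1 - lam * J.indicator 1 (x i))
        = if x i ∈ J then (1 - lam) else 1 := by
      intro i; by_cases h : x i ∈ J <;> simp [h]
    rw [Finset.prod_congr rfl fun i _ => h1 i, Finset.prod_ite, Finset.prod_const,
      Finset.prod_const, one_pow, mul_one]
  -- Step 2: G is a polynomial in lam
  have hGpoly : ∀ lam : ℝ, G lam = ∑ k ∈ Finset.range (N + 1), a k * (1 - lam) ^ k := by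
    intro lam
    rw [hG lam]
    have hpt : ∀ x : Fin N → ℝ,
        (∏ i, (1 - lam * J.indicator 1 (x i))) * P x
          = ∑ k ∈ Finset.range (N + 1),
              ({x : Fin N → ℝ | n x = k}).indicator P x * (1 - lam) ^ k := by
      intro x
      rw [hprod lam x]
      rw [Finset.sum_eq_single_of_mem (n x)
        (Finset.mem_range.mpr (Nat.lt_succ_of_le (hnle x)))]
      · rw [Set.indicator_of_mem (show x ∈ {y : Fin N → ℝ | n y = n x} from rfl) P]
        ring
      · intro j _ hne
        rw [Set.indicator_of_notMem (fun h => hne ((Set.mem_setOf_eq ▸ h).symm)) P, zero_mul]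
    rw [show (fun x : Fin N → ℝ => (∏ i, (1 - lam * J.indicator 1 (x i))) * P x)
        = fun x => ∑ k ∈ Finset.range (N + 1),
            ({x : Fin N → ℝ | n x = k}).indicator P x * (1 - lam) ^ k from funext hpt]
    rw [integral_finset_sum _ fun k _ => (hP.indicator (hAk k)).mul_const _]
    refine Finset.sum_congr rfl fun k _ => ?_
    rw [integral_mul_const]
  -- Step 3: compute the iterated derivative at 1
  set p : Polynomial ℝ :=
      ∑ k ∈ Finset.range (N + 1), Polynomial.C (a k) * (1 - Polynomial.X) ^ k with hp
  have hGp : G = fun lam => p.eval lam := by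
    funext lam
    rw [hGpoly lam, hp]
    rw [Polynomial.eval_finset_sum]
    refine Finset.sum_congr rfl fun k _ => ?_
    simp
  have hID : iteratedDeriv m G 1 = a m * ((-1 : ℝ) ^ m * m.factorial) := by
    rw [hGp, polyEval_iteratedDeriv_aux, hp, iter_derivative_sum_aux]
    show Polynomial.eval (1 : ℝ) (∑ k ∈ Finset.range (N + 1),
      Polynomial.derivative^[m] (Polynomial.C (a k) * (1 - Polynomial.X) ^ k)) = _
    rw [Polynomial.eval_finset_sum]
    rw [Finset.sum_eq_single_of_mem m (Finset.mem_range.mpr (Nat.lt_succ_of_le hm))]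
    · rw [Polynomial.iterate_derivative_C_mul, Polynomial.eval_mul, Polynomial.eval_C,
        eval_iter_one_sub_aux, if_pos rfl]
    · intro k _ hk
      rw [Polynomial.iterate_derivative_C_mul, Polynomial.eval_mul, Polynomial.eval_C,
        eval_iter_one_sub_aux, if_neg hk, mul_zero]
  -- Step 4: identify `E m` with `a m` using symmetry
  set A : Finset (Fin N) → Set (Fin N → ℝ) := fun S => {x | ∀ i, x i ∈ J ↔ i ∈ S} with hA
  have hAmeas : ∀ S, MeasurableSet (A S) := by
    intro S
    have h1 : A S = ⋂ i : Fin N,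
        (fun x : Fin N → ℝ => x i) ⁻¹' (if i ∈ S then J else Jᶜ) := by
      ext x
      simp only [Set.mem_iInter, Set.mem_preimage, hA, Set.mem_setOf_eq]
      refine forall_congr' fun i => ?_
      by_cases h : i ∈ S <;> simp [h]
    rw [h1]
    exact MeasurableSet.iInter fun i =>
      (measurable_pi_apply i) (by by_cases h : i ∈ S <;> simp [h, hJ, hJ.compl])
  have hmemA : ∀ (x : Fin N → ℝ) (S : Finset (Fin N)),
      x ∈ A S ↔ (Finset.univ.filter fun i => x i ∈ J) = S := by
    intro x S
    simp only [hA, Set.mem_setOf_eq]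
    constructor
    · intro h; ext i; simp [h i]
    · intro h i; rw [← h]; simp
  have hdecomp : ∀ x : Fin N → ℝ, ({x : Fin N → ℝ | n x = m}).indicator P x
      = ∑ S ∈ Finset.powersetCard m (Finset.univ : Finset (Fin N)), (A S).indicator P x := by
    intro x
    by_cases hF : n x = m
    · rw [Set.indicator_of_mem (show x ∈ {y : Fin N → ℝ | n y = m} from hF) P]
      rw [Finset.sum_eq_single_of_mem (Finset.univ.filter fun i => x i ∈ J)
        (Finset.mem_powersetCard_univ.mpr hF)]
      · exact (Set.indicator_of_mem ((hmemA x _).mpr rfl) P).symm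
      · intro S _ hne
        exact Set.indicator_of_notMem (fun h => hne (((hmemA x S).mp h).symm)) P
    · rw [Set.indicator_of_notMem (show x ∉ {y : Fin N → ℝ | n y = m} from hF) P]
      refine (Finset.sum_eq_zero fun S hS => ?_).symm
      refine Set.indicator_of_notMem (fun h => hF ?_) P
      show (Finset.filter (fun i => x i ∈ J) Finset.univ).card = m
      rw [(hmemA x S).mp h]
      exact Finset.mem_powersetCard_univ.mp hS
  have ham : a m = ∑ S ∈ Finset.powersetCard m (Finset.univ : Finset (Fin N)),
      ∫ x : Fin N → ℝ, (A S).indicator P x := by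
    show (∫ x : Fin N → ℝ, ({x : Fin N → ℝ | n x = m}).indicator P x) = _
    rw [show (fun x : Fin N → ℝ => ({x : Fin N → ℝ | n x = m}).indicator P x)
        = fun x => ∑ S ∈ Finset.powersetCard m (Finset.univ : Finset (Fin N)),
            (A S).indicator P x from funext hdecomp]
    exact integral_finset_sum _ fun S _ => hP.indicator (hAmeas S)
  set S₀ : Finset (Fin N) := Finset.univ.filter (fun i : Fin N => (i : ℕ) < m) with hS₀
  have hcardS₀ : S₀.card = m := by
    rw [hS₀, Finset.card_filter]
    rw [Fin.sum_univ_eq_sum_range (fun j => if j < m then 1 else 0) N]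
    simp_rw [← Finset.mem_range (n := m), Finset.sum_ite_mem]
    rw [Finset.inter_eq_right.mpr (Finset.range_subset_range.mpr hm)]
    simp
  have hsame : ∀ S ∈ Finset.powersetCard m (Finset.univ : Finset (Fin N)),
      (∫ x : Fin N → ℝ, (A S).indicator P x) = ∫ x : Fin N → ℝ, (A S₀).indicator P x := by
    intro S hS
    have hcard : S.card = m := Finset.mem_powersetCard_univ.mp hS
    have h1 : Fintype.card {i : Fin N // i ∈ S} = Fintype.card {i : Fin N // i ∈ S₀} := by
      simp [Fintype.card_coe, hcard, hcardS₀]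
    have h2 : Fintype.card {i : Fin N // ¬ i ∈ S} = Fintype.card {i : Fin N // ¬ i ∈ S₀} := by
      rw [Fintype.card_subtype_compl, Fintype.card_subtype_compl, h1]
    set e := Fintype.equivOfCardEq h1 with he
    set f := Fintype.equivOfCardEq h2 with hf
    set σ : Equiv.Perm (Fin N) := Equiv.subtypeCongr e f with hσdef
    have hσ : ∀ i, σ i ∈ S₀ ↔ i ∈ S := by
      intro i
      by_cases h : i ∈ S
      · have hv : σ i = ↑(e ⟨i, h⟩) := by simp [hσdef, Equiv.subtypeCongr, h]
        rw [hv]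
        simp [h, (e ⟨i, h⟩).2]
      · have hv : σ i = ↑(f ⟨i, h⟩) := by simp [hσdef, Equiv.subtypeCongr, h]
        rw [hv]
        simp [h, (f ⟨i, h⟩).2]
    have hAiff : ∀ x : Fin N → ℝ, (x ∘ ⇑σ.symm) ∈ A S₀ ↔ x ∈ A S := by
      intro x
      simp only [hA, Set.mem_setOf_eq, Function.comp_apply]
      constructor
      · intro h j
        have hj := h (σ j)
        rw [Equiv.symm_apply_apply] at hj
        rw [hj, hσ j]
      · intro h i
        rw [h (σ.symm i), ← hσ (σ.symm i), Equiv.apply_symm_apply]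
    have hmp : MeasurePreserving (MeasurableEquiv.arrowCongr' σ (MeasurableEquiv.refl ℝ))
        (volume : Measure (Fin N → ℝ)) volume :=
      volume_preserving_arrowCongr' σ (MeasurableEquiv.refl ℝ) (MeasurePreserving.id _)
    have hcv := hmp.integral_comp' (fun x : Fin N → ℝ => (A S₀).indicator P x)
    rw [← hcv]
    congr 1
    funext x
    have hT : (MeasurableEquiv.arrowCongr' σ (MeasurableEquiv.refl ℝ)) x = x ∘ ⇑σ.symm := by
      rfl
    rw [hT]
    by_cases hx : x ∈ A S
    · rw [Set.indicator_of_mem hx P, Set.indicator_of_mem ((hAiff x).mpr hx) P]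
      exact (hsym σ.symm x).symm
    · rw [Set.indicator_of_notMem hx P,
        Set.indicator_of_notMem (fun h => hx ((hAiff x).mp h)) P]
  have hcount : a m = (N.choose m : ℝ) * ∫ x : Fin N → ℝ, (A S₀).indicator P x := by
    rw [ham, Finset.sum_congr rfl hsame, Finset.sum_const, Finset.card_powersetCard,
      Finset.card_univ, Fintype.card_fin, nsmul_eq_mul]
  -- Step 5: the integrand of E m is the indicator of A S₀
  have hEpt : ∀ x : Fin N → ℝ,
      (∏ i ∈ Finset.univ.filter (fun i : Fin N => (i : ℕ) < m), J.indicator 1 (x i)) *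
      (∏ i ∈ Finset.univ.filter (fun i : Fin N => m ≤ (i : ℕ)), (1 - J.indicator 1 (x i))) * P x
      = (A S₀).indicator P x := by
    intro x
    have hS₀mem : ∀ i : Fin N, i ∈ S₀ ↔ (i : ℕ) < m := by
      intro i; rw [hS₀]; simp
    by_cases hx : x ∈ A S₀
    · rw [Set.indicator_of_mem hx P]
      have hxi := (hmemA x S₀).mp hx  -- filter = S₀
      have h1 : ∀ i ∈ Finset.univ.filter (fun i : Fin N => (i : ℕ) < m),
          J.indicator 1 (x i) = (1 : ℝ) := by
        intro i hi
        have hiJ : x i ∈ J := (hx i).mpr ((hS₀mem i).mpr (by simpa using hi))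
        simp [hiJ]
      have h2 : ∀ i ∈ Finset.univ.filter (fun i : Fin N => m ≤ (i : ℕ)),
          (1 - J.indicator 1 (x i)) = (1 : ℝ) := by
        intro i hi
        have hnot : ¬ (i : ℕ) < m := by simpa using Nat.not_lt.mpr (by simpa using hi)
        have hiJ : x i ∉ J := fun h => hnot ((hS₀mem i).mp ((hx i).mp h))
        simp [hiJ]
      have e1 := Finset.prod_eq_one h1
      have e2 := Finset.prod_eq_one h2
      simp only [e1, e2, one_mul]
    · rw [Set.indicator_of_notMem hx P]
      simp only [hA, Set.mem_setOf_eq, not_forall] at hx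
      obtain ⟨i, hi⟩ := hx
      by_cases him : (i : ℕ) < m
      · have hxi : x i ∉ J := fun h => hi (iff_of_true h ((hS₀mem i).mpr him))
        have e1 : (∏ i ∈ Finset.univ.filter (fun i : Fin N => (i : ℕ) < m),
            J.indicator 1 (x i)) = (0 : ℝ) :=
          Finset.prod_eq_zero (Finset.mem_filter.mpr ⟨Finset.mem_univ i, him⟩) (by simp [hxi])
        simp only [e1, zero_mul]
      · have hxi : x i ∈ J := by
          by_contra h
          exact hi (iff_of_false h (fun hh => him ((hS₀mem i).mp hh)))
        have e2 : (∏ i ∈ Finset.univ.filter (fun i : Fin N => m ≤ (i : ℕ)),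
            (1 - J.indicator 1 (x i))) = (0 : ℝ) :=
          Finset.prod_eq_zero (Finset.mem_filter.mpr ⟨Finset.mem_univ i, Nat.not_lt.mp him⟩)
            (by simp [hxi])
        simp only [e2, mul_zero, zero_mul]
  have hEa : E m = a m := by
    rw [hE m]
    rw [show (fun x : Fin N → ℝ =>
        (∏ i ∈ Finset.univ.filter (fun i : Fin N => (i : ℕ) < m), J.indicator 1 (x i)) *
        (∏ i ∈ Finset.univ.filter (fun i : Fin N => m ≤ (i : ℕ)), (1 - J.indicator 1 (x i))) *
        P x) = fun x => (A S₀).indicator P x from funext hEpt]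
    rw [← hcount]
  rw [hEa, hID]
  have hfac : (m.factorial : ℝ) ≠ 0 := Nat.cast_ne_zero.mpr m.factorial_ne_zero
  have h2 : ((-1 : ℝ) ^ m) * ((-1 : ℝ) ^ m) = 1 := by
    rw [← pow_add]
    exact Even.neg_one_pow ⟨m, rfl⟩
  have h3 : (-1 : ℝ) ^ m / (m.factorial : ℝ) * (a m * ((-1) ^ m * (m.factorial : ℝ)))
      = a m * (((-1 : ℝ) ^ m * (-1 : ℝ) ^ m) * ((m.factorial : ℝ) / (m.factorial : ℝ))) := by
    ring
  rw [h3, h2, div_self hfac, one_mul, mul_one]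
end

section
/- Let H_n denote the n-th physicists' Hermite polynomial, defined by H_n(x) = (−1)^n e^{x²} (d/dx)^n e^{−x²}. Then for every nonnegative integer m, ∫_ℝ H_{2m}(x) · e^{−x²/2} dx = √(2π) · (2m)! / m!. -/
open MeasureTheory

/-- The `n`-th physicists' Hermite polynomial, via the Rodrigues formula
`H_n(x) = (−1)^n e^{x²} (d/dx)^n e^{−x²}`. -/
noncomputable def physHermite (n : ℕ) (x : ℝ) : ℝ :=
  (-1) ^ n * Real.exp (x ^ 2) * iteratedDeriv n (fun y : ℝ => Real.exp (-y ^ 2)) x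

/-!
`H_n` is a polynomial satisfying `H_{n+1} = 2x H_n - H_n'` and `H_{n+1}' = 2(n+1) H_n`.
Gaussian integration by parts, `∫ Q' e^{-x²/2} = ∫ x Q e^{-x²/2}` for polynomials `Q`, turns the
first recurrence into `∫ H_{n+1} e^{-x²/2} = ∫ H_n' e^{-x²/2}`, so by the second one the moments
`I_n = ∫ H_n e^{-x²/2}` satisfy `I_{n+2} = 2(n+1) I_n`. With the Gaussian integral `I_0 = √(2π)`
this gives `I_{2m} = √(2π) ∏_{k<m} 2(2k+1) = √(2π) (2m)!/m!`.
-/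

open Polynomial Real

section GaussianWeight

variable {b : ℝ}

theorem integrable_pow_mul_exp_neg_mul_sq (hb : 0 < b) (k : ℕ) :
    Integrable fun x : ℝ => x ^ k * exp (-b * x ^ 2) := by
  simpa using integrable_rpow_mul_exp_neg_mul_sq hb (s := k) (by linarith [k.cast_nonneg (α := ℝ)])

theorem integrable_eval_mul_exp_neg_mul_sq (hb : 0 < b) (Q : ℝ[X]) :
    Integrable fun x : ℝ => Q.eval x * exp (-b * x ^ 2) := by
  induction Q using Polynomial.induction_on' with
  | add p q hp hq => simpa only [eval_add, add_mul, Pi.add_def] using hp.add hq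
  | monomial k c =>
    simpa only [eval_monomial, mul_assoc] using (integrable_pow_mul_exp_neg_mul_sq hb k).const_mul c

theorem hasDerivAt_exp_neg_mul_sq (b x : ℝ) :
    HasDerivAt (fun y : ℝ => exp (-b * y ^ 2)) (-2 * b * x * exp (-b * x ^ 2)) x := by
  convert ((hasDerivAt_pow 2 x).const_mul (-b)).exp using 1
  ring

theorem integral_derivative_eval_mul_exp_neg_mul_sq (hb : 0 < b) (Q : ℝ[X]) :
    ∫ x : ℝ, (derivative Q).eval x * exp (-b * x ^ 2)
      = 2 * b * ∫ x : ℝ, x * Q.eval x * exp (-b * x ^ 2) := by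
  have hQv' : Integrable fun x : ℝ => Q.eval x * (-2 * b * x * exp (-b * x ^ 2)) :=
    (integrable_eval_mul_exp_neg_mul_sq hb (C (-2 * b) * X * Q)).congr
      (.of_forall fun x => by simp only [eval_mul, eval_C, eval_X]; ring)
  have hibp := integral_mul_deriv_eq_deriv_mul_of_integrable
    (fun x _ => Q.hasDerivAt x) (fun x _ => hasDerivAt_exp_neg_mul_sq b x)
    hQv' (integrable_eval_mul_exp_neg_mul_sq hb _) (integrable_eval_mul_exp_neg_mul_sq hb Q)
  calc ∫ x : ℝ, (derivative Q).eval x * exp (-b * x ^ 2)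
      = -∫ x : ℝ, Q.eval x * (-2 * b * x * exp (-b * x ^ 2)) := by rw [hibp, neg_neg]
    _ = -∫ x : ℝ, -2 * b * (x * Q.eval x * exp (-b * x ^ 2)) := by congr 2; funext x; ring
    _ = 2 * b * ∫ x : ℝ, x * Q.eval x * exp (-b * x ^ 2) := by rw [integral_const_mul]; ring

end GaussianWeight

noncomputable def physHermitePoly : ℕ → ℝ[X]
  | 0 => 1
  | n + 1 => 2 * X * physHermitePoly n - derivative (physHermitePoly n)

@[simp] theorem physHermitePoly_zero : physHermitePoly 0 = 1 := rfl

theorem physHermitePoly_succ (n : ℕ) :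
    physHermitePoly (n + 1) = 2 * X * physHermitePoly n - derivative (physHermitePoly n) := rfl

theorem derivative_physHermitePoly_succ (n : ℕ) :
    derivative (physHermitePoly (n + 1)) = 2 * (n + 1) * physHermitePoly n := by
  induction n with
  | zero => simp [physHermitePoly_succ]
  | succ n ih =>
    rw [physHermitePoly_succ (n + 1), derivative_sub, ih]
    simp only [derivative_mul, derivative_ofNat, derivative_X, derivative_natCast, derivative_add,
      derivative_one, ih]
    rw [physHermitePoly_succ n]
    push_cast
    ring

theorem iteratedDeriv_exp_neg_sq (n : ℕ) (x : ℝ) :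
    iteratedDeriv n (fun y : ℝ => exp (-y ^ 2)) x
      = (-1) ^ n * (physHermitePoly n).eval x * exp (-x ^ 2) := by
  induction n generalizing x with
  | zero => simp
  | succ n ih =>
    rw [iteratedDeriv_succ, funext ih]
    have hgauss : HasDerivAt (fun y : ℝ => exp (-y ^ 2)) (-2 * x * exp (-x ^ 2)) x := by
      simpa using hasDerivAt_exp_neg_mul_sq 1 x
    refine ((((physHermitePoly n).hasDerivAt x).const_mul ((-1) ^ n)).mul hgauss).deriv.trans ?_
    simp only [physHermitePoly_succ, eval_sub, eval_mul, eval_ofNat, eval_X]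
    ring

theorem physHermite_eq_eval (n : ℕ) (x : ℝ) : physHermite n x = (physHermitePoly n).eval x := by
  rw [physHermite, iteratedDeriv_exp_neg_sq]
  calc (-1) ^ n * exp (x ^ 2) * ((-1) ^ n * (physHermitePoly n).eval x * exp (-x ^ 2))
      = ((-1) ^ n) ^ 2 * (exp (x ^ 2) * exp (-x ^ 2)) * (physHermitePoly n).eval x := by ring
    _ = (physHermitePoly n).eval x := by rw [← exp_add]; simp [← pow_mul, pow_mul']

theorem integral_physHermitePoly_succ (n : ℕ) :
    ∫ x : ℝ, (physHermitePoly (n + 1)).eval x * exp (-(1 / 2) * x ^ 2)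
      = ∫ x : ℝ, (derivative (physHermitePoly n)).eval x * exp (-(1 / 2) * x ^ 2) := by
  set H := physHermitePoly n
  have hb : (0 : ℝ) < 1 / 2 := by norm_num
  have hXH : Integrable fun x : ℝ => x * H.eval x * exp (-(1 / 2) * x ^ 2) :=
    (integrable_eval_mul_exp_neg_mul_sq hb (X * H)).congr
      (.of_forall fun x => by simp only [eval_mul, eval_X])
  calc ∫ x : ℝ, (physHermitePoly (n + 1)).eval x * exp (-(1 / 2) * x ^ 2)
      = ∫ x : ℝ, 2 * (x * H.eval x * exp (-(1 / 2) * x ^ 2))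
          - (derivative H).eval x * exp (-(1 / 2) * x ^ 2) := by
        congr 1; funext x
        simp only [physHermitePoly_succ, eval_sub, eval_mul, eval_ofNat, eval_X, H]
        ring
    _ = (2 * ∫ x : ℝ, x * H.eval x * exp (-(1 / 2) * x ^ 2))
          - ∫ x : ℝ, (derivative H).eval x * exp (-(1 / 2) * x ^ 2) := by
        rw [integral_sub (hXH.const_mul 2) (integrable_eval_mul_exp_neg_mul_sq hb _),
          integral_const_mul]
    _ = ∫ x : ℝ, (derivative H).eval x * exp (-(1 / 2) * x ^ 2) := by
        rw [integral_derivative_eval_mul_exp_neg_mul_sq hb]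
        ring

theorem integral_physHermitePoly_succ_succ (n : ℕ) :
    ∫ x : ℝ, (physHermitePoly (n + 2)).eval x * exp (-(1 / 2) * x ^ 2)
      = 2 * (n + 1) * ∫ x : ℝ, (physHermitePoly n).eval x * exp (-(1 / 2) * x ^ 2) := by
  rw [integral_physHermitePoly_succ, derivative_physHermitePoly_succ, ← integral_const_mul]
  congr 1; funext x
  simp only [eval_mul, eval_ofNat, eval_add, eval_natCast, eval_one]
  ring

/-- `∫_ℝ H_{2m}(x) e^{−x²/2} dx = √(2π) · (2m)! / m!`. -/
theorem integral_physHermite_even (m : ℕ) :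
    ∫ x : ℝ, physHermite (2 * m) x * Real.exp (-x ^ 2 / 2)
      = Real.sqrt (2 * Real.pi) * ((2 * m).factorial : ℝ) / (m.factorial : ℝ) := by
  have hweight (x : ℝ) : exp (-x ^ 2 / 2) = exp (-(1 / 2) * x ^ 2) := by ring_nf
  simp_rw [physHermite_eq_eval, hweight]
  induction m with
  | zero =>
    simp only [mul_zero, physHermitePoly_zero, eval_one, one_mul, Nat.factorial_zero,
      Nat.cast_one, mul_one, div_one, integral_gaussian]
    congr 1
    ring
  | succ m ih =>
    rw [mul_add_one, integral_physHermitePoly_succ_succ, ih, Nat.factorial_succ,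
      show 2 * m + 2 = (2 * m + 1) + 1 from rfl, Nat.factorial_succ, Nat.factorial_succ]
    push_cast
    field_simp
    ring
end

section
/- For j a nonnegative integer, let a_j denote the j-th derivative of the function λ ↦ √(λ/(2−λ)) evaluated at λ = 1 (this function is smooth on the interval (0,2)). Then a_0 = 1, and for every j ≥ 1: if j is even then a_j = (j−1)·a_{j−1}, while if j is odd then a_j = j·a_{j−1}. -/
/-!
Write `f λ = √(λ / (2 - λ))`. On `(0, 2)` one has `λ (2 - λ) f' = f`, and since
`λ (2 - λ) = 1 - (λ - 1)²` this is the linear ODE `f' = f + (λ - 1)² f'`. Differentiating it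
`n` times at `λ = 1` with the Leibniz rule kills every term of `((λ - 1)² f')⁽ⁿ⁾` except one, so
`a (n + 1) = a n + n (n - 1) a (n - 1)`. This recurrence propagates the two relations
`a (2k + 1) = (2k + 1) a (2k)` and `a (2k + 2) = (2k + 1) a (2k + 1)` by induction on `k`.
-/

open Filter Topology Real

section Leibniz

variable {𝕜 : Type*} [NontriviallyNormedField 𝕜]

lemma iteratedDeriv_sub_pow_self (x : 𝕜) (i m : ℕ) :
    iteratedDeriv i (fun t => (t - x) ^ m) x = if i = m then (m.factorial : 𝕜) else 0 := by
  simp only [iteratedDeriv_comp_sub_const i (· ^ m) x, sub_self, iteratedDeriv_fun_pow_zero,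
    Nat.cast_ite, Nat.cast_zero]

lemma iteratedDeriv_sub_pow_mul_self {g : 𝕜 → 𝕜} {x : 𝕜} {n : ℕ} (m : ℕ)
    (hg : ContDiffAt 𝕜 n g x) :
    iteratedDeriv n (fun t => (t - x) ^ m * g t) x
      = n.descFactorial m * iteratedDeriv (n - m) g x := by
  rw [iteratedDeriv_fun_mul (by fun_prop) hg, Finset.sum_eq_single m]
  · rw [iteratedDeriv_sub_pow_self, if_pos rfl, Nat.descFactorial_eq_factorial_mul_choose]
    push_cast; ring
  · intro i _ hi
    rw [iteratedDeriv_sub_pow_self, if_neg hi]; ring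
  · intro hm
    rw [Nat.choose_eq_zero_of_lt (by simpa using hm)]; ring

lemma iteratedDeriv_succ_of_deriv_eventuallyEq_add_sub_sq_mul {f : 𝕜 → 𝕜} {x : 𝕜} {n : ℕ}
    (hf : ContDiffAt 𝕜 (n + 1) f x)
    (hode : deriv f =ᶠ[𝓝 x] fun t => f t + (t - x) ^ 2 * deriv f t) :
    iteratedDeriv (n + 1) f x
      = iteratedDeriv n f x + n.descFactorial 2 * iteratedDeriv (n - 1) f x := by
  have hf' : ContDiffAt 𝕜 n (deriv f) x := hf.derivWithin le_rfl
  rw [iteratedDeriv_succ', hode.iteratedDeriv_eq,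
    iteratedDeriv_fun_add (hf.of_le (by norm_cast; omega)) (by fun_prop),
    iteratedDeriv_sub_pow_mul_self 2 hf']
  rcases n with _ | _ | n
  · simp
  · simp
  · rw [show n + 2 - 1 = n + 1 from rfl, iteratedDeriv_succ' (n := n) (f := f)]
    rfl

end Leibniz

lemma eq_mul_of_descFactorial_recurrence {R : Type*} [CommRing R] {b : ℕ → R}
    (h : ∀ n, b (n + 1) = b n + n.descFactorial 2 * b (n - 1)) (k : ℕ) :
    b (2 * k + 1) = (2 * k + 1) * b (2 * k) ∧ b (2 * k + 2) = (2 * k + 1) * b (2 * k + 1) := by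
  induction k with
  | zero => simp [h]
  | succ k ih =>
    have h₁ := h (2 * k + 2)
    have h₂ := h (2 * k + 3)
    simp only [Nat.descFactorial, show 2 * k + 3 - 1 = 2 * k + 2 from rfl] at h₁ h₂
    push_cast at h₁ h₂ ⊢
    have hodd : b (2 * k + 3) = (2 * k + 3) * b (2 * k + 2) := by
      linear_combination h₁ - (2 * k + 2) * ih.2
    refine ⟨by linear_combination hodd, ?_⟩
    linear_combination h₂ - (2 * k + 2) * hodd

lemma contDiffAt_sqrt_div_two_sub {n : WithTop ℕ∞} {t : ℝ} (ht₀ : 0 < t) (ht₂ : t < 2) :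
    ContDiffAt ℝ n (fun l : ℝ => √(l / (2 - l))) t := by
  have h₂ : 0 < 2 - t := by linarith
  exact (contDiffAt_id.div (contDiffAt_const.sub contDiffAt_id) h₂.ne').sqrt (div_pos ht₀ h₂).ne'

lemma hasDerivAt_sqrt_div_two_sub {t : ℝ} (ht₀ : 0 < t) (ht₂ : t < 2) :
    HasDerivAt (fun l : ℝ => √(l / (2 - l))) (√(t / (2 - t)) / (t * (2 - t))) t := by
  have h₂ : 2 - t ≠ 0 := by linarith
  have hq : 0 < t / (2 - t) := div_pos ht₀ (by linarith)
  have hsq : √(t / (2 - t)) ^ 2 = t / (2 - t) := sq_sqrt hq.le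
  convert (((hasDerivAt_id' t).fun_div ((hasDerivAt_id' t).const_sub 2) h₂).sqrt hq.ne') using 1
  field_simp
  rw [hsq]
  field_simp
  ring

lemma deriv_sqrt_div_two_sub_eventuallyEq :
    deriv (fun l : ℝ => √(l / (2 - l))) =ᶠ[𝓝 1]
      fun t => √(t / (2 - t)) + (t - 1) ^ 2 * deriv (fun l : ℝ => √(l / (2 - l))) t := by
  filter_upwards [Ioo_mem_nhds (show (0 : ℝ) < 1 by norm_num) (show (1 : ℝ) < 2 by norm_num)]
    with t ⟨ht₀, ht₂⟩
  rw [(hasDerivAt_sqrt_div_two_sub ht₀ ht₂).deriv]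
  have : t * (2 - t) ≠ 0 := by nlinarith
  field_simp
  ring

/-- Recursion for `a_j = (d^j/dλ^j) √(λ/(2−λ)) |_{λ=1}`: `a_0 = 1`, and for `j ≥ 1`,
`a_j = (j−1)·a_{j−1}` if `j` is even, `a_j = j·a_{j−1}` if `j` is odd. -/
theorem aj_recursion (a : ℕ → ℝ)
    (ha : ∀ j : ℕ, a j = iteratedDeriv j (fun l : ℝ => Real.sqrt (l / (2 - l))) 1) :
    a 0 = 1 ∧ ∀ j : ℕ, 1 ≤ j →
      (Even j → a j = ((j : ℝ) - 1) * a (j - 1)) ∧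
      (Odd j → a j = (j : ℝ) * a (j - 1)) := by
  have hrec (n : ℕ) : a (n + 1) = a n + n.descFactorial 2 * a (n - 1) := by
    simp only [ha]
    exact iteratedDeriv_succ_of_deriv_eventuallyEq_add_sub_sq_mul
      (contDiffAt_sqrt_div_two_sub one_pos one_lt_two) deriv_sqrt_div_two_sub_eventuallyEq
  refine ⟨by norm_num [ha], fun j hj => ⟨?_, ?_⟩⟩
  · rintro ⟨k, rfl⟩
    obtain ⟨i, rfl⟩ : ∃ i, k = i + 1 := ⟨k - 1, by omega⟩
    rw [show i + 1 + (i + 1) = 2 * i + 2 by ring, show 2 * i + 2 - 1 = 2 * i + 1 from rfl,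
      (eq_mul_of_descFactorial_recurrence hrec i).2]
    push_cast
    ring
  · rintro ⟨k, rfl⟩
    rw [Nat.add_sub_cancel, (eq_mul_of_descFactorial_recurrence hrec k).1]
    push_cast
    rfl
end

section
/- Let h : ℝ → ℝ be infinitely differentiable, and define f : (0,2) → ℝ by f(λ) = 1 − √(λ/(2−λ)) · h(2λ − λ²). Then for every nonnegative integer n, f^{(2n)}(1) − (1/(2n+1)) · f^{(2n+1)}(1) equals 1 if n = 0 and equals 0 if n ≥ 1, where f^{(k)}(1) denotes the k-th derivative of f at λ = 1. -/
open Set Filter Topology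

/-- If `g` is smooth on an open set `s`, then each iterated derivative of `g` is
differentiable at points of `s`. -/
lemma diffAt_iteratedDeriv_of_contDiffOn {g : ℝ → ℝ} {s : Set ℝ} (hs : IsOpen s)
    (hg : ContDiffOn ℝ (⊤ : ℕ∞) g s) (m : ℕ) {x : ℝ} (hx : x ∈ s) :
    DifferentiableAt ℝ (iteratedDeriv m g) x := by
  have h1 : DifferentiableWithinAt ℝ (iteratedDerivWithin m g s) s x :=
    hg.differentiableOn_iteratedDerivWithin (by exact_mod_cast WithTop.coe_lt_top _)
      hs.uniqueDiffOn x hx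
  have h2 : DifferentiableAt ℝ (iteratedDerivWithin m g s) x :=
    h1.differentiableAt (hs.mem_nhds hx)
  refine h2.congr_of_eventuallyEq ?_
  filter_upwards [hs.mem_nhds hx] with y hy
  rw [iteratedDeriv_eq_iteratedFDeriv, iteratedDerivWithin_eq_iteratedFDerivWithin,
    iteratedFDerivWithin_of_isOpen m hs hy]

/-- For smooth `h` and `f(λ) = 1 − √(λ/(2−λ))·h(2λ−λ²)`,
`f^{(2n)}(1) − (1/(2n+1))·f^{(2n+1)}(1)` equals `1` if `n = 0` and `0` if `n ≥ 1`. -/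
theorem f_derivative_identity (h : ℝ → ℝ) (hh : ContDiff ℝ (⊤ : ℕ∞) h) (f : ℝ → ℝ)
    (hf : ∀ l : ℝ, f l = 1 - Real.sqrt (l / (2 - l)) * h (2 * l - l ^ 2)) :
    ∀ n : ℕ,
      iteratedDeriv (2 * n) f 1 - (1 / (2 * (n : ℝ) + 1)) * iteratedDeriv (2 * n + 1) f 1
        = if n = 0 then 1 else 0 := by
  set S : Set ℝ := Set.Ioo 0 2 with hS
  have hSopen : IsOpen S := isOpen_Ioo
  have h1S : (1 : ℝ) ∈ S := by constructor <;> norm_num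
  set K : ℝ → ℝ := fun x => h (2 * x - x ^ 2) / Real.sqrt (2 * x - x ^ 2) with hKdef
  have hpoly : ContDiff ℝ (⊤ : ℕ∞) (fun x : ℝ => 2 * x - x ^ 2) := by
    exact (contDiff_const.mul contDiff_id).sub (contDiff_id.pow 2)
  -- K is smooth on S
  have hK : ContDiffOn ℝ (⊤ : ℕ∞) K S := by
    intro x hx
    have hu : (0 : ℝ) < 2 * x - x ^ 2 := by nlinarith [hx.1, hx.2]
    exact ((hh.contDiffAt.comp x hpoly.contDiffAt).div
      ((Real.contDiffAt_sqrt hu.ne').comp x hpoly.contDiffAt)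
      (Real.sqrt_pos.mpr hu).ne').contDiffWithinAt
  have dK : ∀ (m : ℕ) {x : ℝ}, x ∈ S → DifferentiableAt ℝ (iteratedDeriv m K) x :=
    fun m x hx => diffAt_iteratedDeriv_of_contDiffOn hSopen hK m hx
  -- f = 1 - x * K x on S
  have hfK : ∀ x ∈ S, f x = 1 - x * K x := by
    intro x hx
    have hx0 : (0 : ℝ) < x := hx.1
    have hx2 : (0 : ℝ) < 2 - x := by linarith [hx.2]
    have key : Real.sqrt (x / (2 - x)) = x / Real.sqrt (2 * x - x ^ 2) := by
      rw [show 2 * x - x ^ 2 = x * (2 - x) by ring, Real.sqrt_div hx0.le,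
        Real.sqrt_mul hx0.le, ← div_div, Real.div_sqrt]
    rw [hf x, key, hKdef]
    ring
  -- odd derivatives of K vanish at 1
  have hKsymm : ∀ x : ℝ, K (2 - x) = K x := by
    intro x
    have : 2 * (2 - x) - (2 - x) ^ 2 = 2 * x - x ^ 2 := by ring
    simp only [hKdef, this]
  have hodd : ∀ m : ℕ, Odd m → iteratedDeriv m K 1 = 0 := by
    intro m hm
    have e1 : K = fun x => (fun y => K (2 + y)) (-x) := by
      funext x
      simp only
      rw [show (2 : ℝ) + -x = 2 - x by ring, hKsymm x]
    have e2 : iteratedDeriv m K 1 = - iteratedDeriv m K 1 := by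
      calc iteratedDeriv m K 1 = iteratedDeriv m (fun x => (fun y => K (2 + y)) (-x)) 1 := by
            rw [← e1]
        _ = (-1 : ℝ) ^ m • iteratedDeriv m (fun y => K (2 + y)) (-1) :=
            iteratedDeriv_comp_neg m (fun y : ℝ => K (2 + y)) 1
        _ = (-1 : ℝ) ^ m • iteratedDeriv m K (2 + (-1)) := by
            rw [iteratedDeriv_comp_const_add]
        _ = - iteratedDeriv m K 1 := by
            rw [hm.neg_one_pow]
            norm_num
    linarith
  -- the main induction
  have main : ∀ n : ℕ, ∀ x ∈ S, iteratedDeriv (n + 1) f x =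
      -(x * iteratedDeriv (n + 1) K x) - ((n : ℝ) + 1) * iteratedDeriv n K x := by
    intro n
    induction n with
    | zero =>
      intro x hx
      have hKd : DifferentiableAt ℝ K x := by
        have := dK 0 hx; rwa [iteratedDeriv_zero] at this
      have H : HasDerivAt (fun y => 1 - y * K y) (-(x * deriv K x) - 1 * K x) x := by
        have h1 : HasDerivAt (fun y : ℝ => y * K y) (1 * K x + x * deriv K x) x :=
          (hasDerivAt_id x).mul hKd.hasDerivAt
        have h2 : HasDerivAt (fun y => 1 - y * K y) _ x := (hasDerivAt_const x (1 : ℝ)).sub h1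
        convert h2 using 1
        ring
      have heq : f =ᶠ[𝓝 x] fun y => 1 - y * K y := by
        filter_upwards [hSopen.mem_nhds hx] with y hy using hfK y hy
      rw [iteratedDeriv_one, heq.deriv_eq, H.deriv]
      simp [iteratedDeriv_one, iteratedDeriv_zero]
    | succ n IH =>
      intro x hx
      have hD1 : DifferentiableAt ℝ (iteratedDeriv (n + 1) K) x := dK (n + 1) hx
      have hD0 : DifferentiableAt ℝ (iteratedDeriv n K) x := dK n hx
      have h1 : HasDerivAt (fun y : ℝ => y * iteratedDeriv (n + 1) K y)
          (1 * iteratedDeriv (n + 1) K x + x * iteratedDeriv (n + 2) K x) x := by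
        have := (hasDerivAt_id x).mul hD1.hasDerivAt
        rwa [← iteratedDeriv_succ] at this
      have h2 : HasDerivAt (fun y : ℝ => ((n : ℝ) + 1) * iteratedDeriv n K y)
          (((n : ℝ) + 1) * iteratedDeriv (n + 1) K x) x := by
        have := hD0.hasDerivAt.const_mul ((n : ℝ) + 1)
        rwa [← iteratedDeriv_succ] at this
      have H : HasDerivAt (fun y => -(y * iteratedDeriv (n + 1) K y) - ((n : ℝ) + 1) * iteratedDeriv n K y) _ x := h1.neg.sub h2
      have heq : iteratedDeriv (n + 1) f =ᶠ[𝓝 x]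
          fun y => -(y * iteratedDeriv (n + 1) K y) - ((n : ℝ) + 1) * iteratedDeriv n K y := by
        filter_upwards [hSopen.mem_nhds hx] with y hy using IH y hy
      rw [iteratedDeriv_succ, heq.deriv_eq, H.deriv]
      push_cast
      ring
  -- conclude
  intro n
  match n with
  | 0 =>
    simp only [Nat.mul_zero, Nat.cast_zero, iteratedDeriv_zero, if_true]
    have e0 : f 1 = 1 - K 1 := by rw [hfK 1 h1S]; ring
    have e1 : iteratedDeriv (0 + 1) f 1 = -(1 * iteratedDeriv 1 K 1) - 1 * iteratedDeriv 0 K 1 := by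
      have := main 0 1 h1S; simpa using this
    have e2 : iteratedDeriv 1 K 1 = 0 := hodd 1 ⟨0, by norm_num⟩
    simp only [zero_add] at e1
    rw [e0, e1, e2, iteratedDeriv_zero]
    norm_num
  | Nat.succ m =>
    have hEven : iteratedDeriv (2 * (m + 1)) f 1 = -(iteratedDeriv (2 * (m + 1)) K 1) := by
      have := main (2 * m + 1) 1 h1S
      rw [show 2 * m + 1 + 1 = 2 * (m + 1) by ring] at this
      rw [this, hodd (2 * m + 1) ⟨m, by ring⟩]
      push_cast; ring
    have hOddD : iteratedDeriv (2 * (m + 1) + 1) f 1 =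
        -((2 * (m : ℝ) + 3) * iteratedDeriv (2 * (m + 1)) K 1) := by
      have := main (2 * (m + 1)) 1 h1S
      rw [this, hodd (2 * (m + 1) + 1) ⟨m + 1, by ring⟩]
      push_cast; ring
    have hne : (2 * ((m : ℝ) + 1) + 1) ≠ 0 := by positivity
    rw [hEven, hOddD, if_neg (Nat.succ_ne_zero m)]
    push_cast
    field_simp
    ring
end

section
/- Let g, h : ℝ → ℝ be infinitely differentiable. Define f : (0,2) → ℝ by f(λ) = 1 − √(λ/(2−λ)) · h(2λ − λ²), and define d₁ : (0,2) → ℝ by d₁(λ) = g(2λ − λ²) · f(λ). Then for every nonnegative integer n: −(1/(2n+1)!) · d₁^{(2n+1)}(1) + (1/(2n)!) · d₁^{(2n)}(1) = ((−1)^n / n!) · g^{(n)}(1), where superscripts in parentheses denote iterated derivatives evaluated at λ = 1. -/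
open Topology

private lemma my_iterDeriv_add {F G : ℝ → ℝ} (hF : ContDiff ℝ (⊤ : ℕ∞) F)
    (hG : ContDiff ℝ (⊤ : ℕ∞) G) (n : ℕ) (x : ℝ) :
    iteratedDeriv n (fun t => F t + G t) x = iteratedDeriv n F x + iteratedDeriv n G x := by
  have h : (fun t => F t + G t) = F + G := rfl
  rw [h]
  simp_rw [← iteratedDerivWithin_univ]
  exact iteratedDerivWithin_add (Set.mem_univ x) uniqueDiffOn_univ
    ((hF.of_le (by exact_mod_cast le_top)).contDiffWithinAt)
    ((hG.of_le (by exact_mod_cast le_top)).contDiffWithinAt)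

private lemma my_id_mul {B : ℝ → ℝ} (hB : ContDiff ℝ (⊤ : ℕ∞) B) :
    ∀ (m : ℕ) (x : ℝ), iteratedDeriv (m + 1) (fun t => t * B t) x
      = ((m : ℝ) + 1) * iteratedDeriv m B x + x * iteratedDeriv (m + 1) B x := by
  intro m
  induction m with
  | zero =>
    intro x
    have hBx : DifferentiableAt ℝ B x :=
      (hB.differentiable (by simp)).differentiableAt
    rw [iteratedDeriv_one, deriv_fun_mul differentiableAt_fun_id hBx]
    simp [iteratedDeriv_one, iteratedDeriv_zero]
  | succ m ih =>
    intro x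
    have ihf : iteratedDeriv (m + 1) (fun t => t * B t)
        = fun y => ((m : ℝ) + 1) * iteratedDeriv m B y + y * iteratedDeriv (m + 1) B y :=
      funext ih
    have d1 : DifferentiableAt ℝ (iteratedDeriv m B) x :=
      (hB.differentiable_iteratedDeriv m (by exact_mod_cast WithTop.coe_lt_top (m:ℕ))).differentiableAt
    have d2 : DifferentiableAt ℝ (iteratedDeriv (m + 1) B) x :=
      (hB.differentiable_iteratedDeriv (m+1)
        (by exact_mod_cast WithTop.coe_lt_top (m+1:ℕ))).differentiableAt
    rw [iteratedDeriv_succ, ihf]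
    rw [deriv_fun_add ((d1.const_mul _)) (differentiableAt_fun_id.fun_mul d2),
      deriv_const_mul _ d1, deriv_fun_mul differentiableAt_fun_id d2, deriv_id'']
    rw [show deriv (iteratedDeriv m B) = iteratedDeriv (m+1) B from (iteratedDeriv_succ).symm,
      show deriv (iteratedDeriv (m+1) B) = iteratedDeriv (m+2) B from (iteratedDeriv_succ).symm]
    push_cast
    ring

private lemma my_deriv_comp_sq {F : ℝ → ℝ} (hF : ContDiff ℝ (⊤ : ℕ∞) F) :
    deriv (fun t : ℝ => F (t ^ 2)) = fun t => t * (2 * deriv F (t ^ 2)) := by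
  funext t
  have h1 : HasDerivAt (fun s : ℝ => s ^ 2) (2 * t) t := by
    simpa using hasDerivAt_pow 2 t
  have h2 : HasDerivAt F (deriv F (t ^ 2)) (t ^ 2) :=
    ((hF.differentiable (by simp)) (t ^ 2)).hasDerivAt
  have h4 : HasDerivAt (fun t : ℝ => F (t ^ 2)) (deriv F (t ^ 2) * (2 * t)) t :=
    HasDerivAt.comp (h₂ := F) (h := fun s : ℝ => s ^ 2) t h2 h1
  rw [h4.deriv]; ring

private lemma my_sq_lemma : ∀ (n : ℕ) (F : ℝ → ℝ), ContDiff ℝ (⊤ : ℕ∞) F →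
    iteratedDeriv (2 * n) (fun t => F (t ^ 2)) 0
        = (((2 * n).factorial : ℝ) / (n.factorial : ℝ)) * iteratedDeriv n F 0
      ∧ iteratedDeriv (2 * n + 1) (fun t => F (t ^ 2)) 0 = 0 := by
  intro n
  induction n with
  | zero =>
    intro F hF
    constructor
    · norm_num [iteratedDeriv_zero]
    · have : (2 * 0 + 1 : ℕ) = 1 := by norm_num
      rw [this, iteratedDeriv_one, my_deriv_comp_sq hF]
      norm_num
  | succ n ih =>
    intro F hF
    have hF' : ContDiff ℝ (⊤ : ℕ∞) (deriv F) := (contDiff_infty_iff_deriv.mp hF).2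
    set G : ℝ → ℝ := fun u => 2 * deriv F u with hGdef
    have hG : ContDiff ℝ (⊤ : ℕ∞) G := contDiff_const.mul hF'
    have hGsq : ContDiff ℝ (⊤ : ℕ∞) (fun t : ℝ => G (t ^ 2)) :=
      hG.comp (contDiff_id.pow 2)
    have hder : deriv (fun t : ℝ => F (t ^ 2)) = fun t => t * G (t ^ 2) :=
      my_deriv_comp_sq hF
    have hGn : ∀ k : ℕ, iteratedDeriv k G 0 = 2 * iteratedDeriv (k + 1) F 0 := by
      intro k
      have h1 : iteratedDeriv k G 0 = 2 * iteratedDeriv k (deriv F) 0 := by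
        simp_rw [← iteratedDerivWithin_univ]
        exact iteratedDerivWithin_const_mul (Set.mem_univ 0) uniqueDiffOn_univ 2
          ((hF'.of_le (by exact_mod_cast le_top)).contDiffWithinAt)
      rw [h1, ← iteratedDeriv_succ']
    constructor
    · have e1 : 2 * (n + 1) = (2 * n + 1) + 1 := by ring
      rw [e1, iteratedDeriv_succ', hder, my_id_mul hGsq (2 * n) 0, (ih G hG).1, hGn n]
      have hn : (n.factorial : ℝ) ≠ 0 := by exact_mod_cast n.factorial_ne_zero
      have hn1 : ((n + 1).factorial : ℝ) ≠ 0 := by exact_mod_cast (n + 1).factorial_ne_zero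
      have hfe : (((2 * n + 1) + 1).factorial : ℝ)
          = ((2 * n : ℕ) + 2) * ((2 * n : ℕ) + 1) * ((2 * n).factorial : ℝ) := by
        rw [Nat.factorial_succ, Nat.factorial_succ]
        push_cast
        ring
      have hfn1 : ((n + 1).factorial : ℝ) = ((n : ℝ) + 1) * (n.factorial : ℝ) := by
        rw [Nat.factorial_succ]; push_cast; ring
      rw [hfe, hfn1]
      field_simp
      push_cast
      ring
    · have e1 : 2 * (n + 1) + 1 = (2 * n + 2) + 1 := by ring
      rw [e1, iteratedDeriv_succ', hder, my_id_mul hGsq (2 * n + 1) 0, (ih G hG).2]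
      simp

private noncomputable def myBump : ContDiffBump (0 : ℝ) :=
  ⟨1/4, 1/2, by norm_num, by norm_num⟩

private noncomputable def myW : ℝ → ℝ := fun u => myBump u * Real.sqrt (1 / (1 - u))

private lemma myW_smooth : ContDiff ℝ (⊤ : ℕ∞) myW := by
  rw [contDiff_iff_contDiffAt]
  intro x
  by_cases hx : x < 1
  · have h1x : (0:ℝ) < 1 - x := by linarith
    have hinner : ContDiffAt ℝ (⊤ : ℕ∞) (fun u : ℝ => 1 / (1 - u)) x := by
      apply ContDiffAt.div contDiffAt_const ((contDiff_const.sub contDiff_id).contDiffAt)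
      intro h
      simp only [id_eq] at h
      linarith [sub_eq_zero.mp h]
    have hs : ContDiffAt ℝ (⊤ : ℕ∞) (fun u : ℝ => Real.sqrt (1 / (1 - u))) x := by
      have hne : (1:ℝ) / (1 - x) ≠ 0 := by positivity
      exact (Real.contDiffAt_sqrt hne).comp x hinner
    exact (myBump.contDiff.contDiffAt).mul hs
  · push_neg at hx
    have hev : myW =ᶠ[𝓝 x] fun _ => 0 := by
      filter_upwards [eventually_gt_nhds (show (1:ℝ)/2 < x by linarith)] with u hu
      have hsup : u ∉ Function.support (myBump : ℝ → ℝ) := by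
        rw [ContDiffBump.support_eq]
        simp only [Metric.mem_ball, Real.dist_eq, sub_zero, not_lt]
        rw [abs_of_pos (by linarith)]
        show myBump.rOut ≤ u
        have hro : myBump.rOut = 1/2 := rfl
        linarith
      have hb : myBump u = 0 := by simpa [Function.mem_support] using hsup
      simp [myW, hb]
    exact (contDiffAt_const (c := (0:ℝ))).congr_of_eventuallyEq hev

private lemma myW_eq {u : ℝ} (hu : |u| ≤ 1/4) : myW u = Real.sqrt (1 / (1 - u)) := by
  have h1 : myBump u = 1 := by
    apply myBump.one_of_mem_closedBall
    simp only [Metric.mem_closedBall, Real.dist_eq, sub_zero]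
    show |u| ≤ myBump.rIn
    have : myBump.rIn = 1/4 := rfl
    linarith
  simp [myW, h1]


/-- The inductive step of the GOE/GSE interlacing property: for smooth `g, h`, with
`f(λ) = 1 − √(λ/(2−λ))·h(2λ−λ²)` and `d₁(λ) = g(2λ−λ²)·f(λ)`,
`−(1/(2n+1)!)·d₁^{(2n+1)}(1) + (1/(2n)!)·d₁^{(2n)}(1) = ((−1)^n/n!)·g^{(n)}(1)`. -/
theorem interlacing_inductive_step (g h : ℝ → ℝ)
    (hg : ContDiff ℝ (⊤ : ℕ∞) g) (hh : ContDiff ℝ (⊤ : ℕ∞) h) (f d1 : ℝ → ℝ)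
    (hf : ∀ l : ℝ, f l = 1 - Real.sqrt (l / (2 - l)) * h (2 * l - l ^ 2))
    (hd1 : ∀ l : ℝ, d1 l = g (2 * l - l ^ 2) * f l) :
    ∀ n : ℕ,
      -(1 / ((2 * n + 1).factorial : ℝ)) * iteratedDeriv (2 * n + 1) d1 1
          + (1 / ((2 * n).factorial : ℝ)) * iteratedDeriv (2 * n) d1 1
        = ((-1) ^ n / (n.factorial : ℝ)) * iteratedDeriv n g 1 := by
  intro n
  have hg' : ContDiff ℝ (⊤ : ℕ∞) g := hg.of_le (by simp)
  have hh' : ContDiff ℝ (⊤ : ℕ∞) h := hh.of_le (by simp)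
  have haff : ContDiff ℝ (⊤ : ℕ∞) (fun u : ℝ => 1 - u) := contDiff_const.sub contDiff_id
  set q : ℝ → ℝ := fun u => -(g (1 - u) * h (1 - u) * myW u) with hqdef
  have hgcomp : ContDiff ℝ (⊤ : ℕ∞) (fun u : ℝ => g (1 - u)) := hg'.comp haff
  have hhcomp : ContDiff ℝ (⊤ : ℕ∞) (fun u : ℝ => h (1 - u)) := hh'.comp haff
  have hq : ContDiff ℝ (⊤ : ℕ∞) q := ((hgcomp.mul hhcomp).mul myW_smooth).neg
  set p : ℝ → ℝ := fun u => g (1 - u) + q u with hpdef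
  have hp : ContDiff ℝ (⊤ : ℕ∞) p := hgcomp.add hq
  have hsq : ContDiff ℝ (⊤ : ℕ∞) (fun t : ℝ => t ^ 2) := contDiff_id.pow 2
  have hpsq : ContDiff ℝ (⊤ : ℕ∞) (fun t : ℝ => p (t ^ 2)) := hp.comp hsq
  have hqsq : ContDiff ℝ (⊤ : ℕ∞) (fun t : ℝ => q (t ^ 2)) := hq.comp hsq
  have key : ∀ t : ℝ, |t| < 1/2 → d1 (1 + t) = p (t ^ 2) + t * q (t ^ 2) := by
    intro t ht
    obtain ⟨ht1, ht2⟩ := abs_lt.mp ht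
    have h1t : (0:ℝ) < 1 - t := by linarith
    have h1t' : (0:ℝ) < 1 + t := by linarith
    have h1t2 : (0:ℝ) < 1 - t ^ 2 := by nlinarith
    have e0 : 2 * (1 + t) - (1 + t) ^ 2 = 1 - t ^ 2 := by ring
    have eW : myW (t ^ 2) = Real.sqrt (1 / (1 - t ^ 2)) := by
      apply myW_eq
      rw [abs_of_nonneg (sq_nonneg t)]
      nlinarith
    have esqrt : Real.sqrt ((1 + t) / (2 - (1 + t))) = (1 + t) * myW (t ^ 2) := by
      have e1 : (1 + t) / (2 - (1 + t)) = (1 + t) ^ 2 * (1 / (1 - t ^ 2)) := by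
        rw [show (2:ℝ) - (1 + t) = 1 - t by ring]
        field_simp
        ring
      rw [e1, Real.sqrt_mul (sq_nonneg _), Real.sqrt_sq h1t'.le, eW]
    rw [hd1, hf, e0, esqrt]
    simp only [hpdef, hqdef]
    have e2 : 1 - t ^ 2 = 1 - t ^ 2 := rfl
    ring
  have hshift : ∀ k : ℕ, iteratedDeriv k d1 1
      = iteratedDeriv k (fun t => p (t ^ 2) + t * q (t ^ 2)) 0 := by
    intro k
    have h1 : iteratedDeriv k d1 1 = iteratedDeriv k (fun z => d1 (1 + z)) 0 := by
      rw [iteratedDeriv_comp_const_add k d1 1]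
      norm_num
    rw [h1]
    apply Filter.EventuallyEq.iteratedDeriv_eq
    filter_upwards [Metric.ball_mem_nhds (0:ℝ) (by norm_num : (0:ℝ) < 1/2)] with t ht
    rw [Metric.mem_ball, Real.dist_eq, sub_zero] at ht
    exact key t ht
  have hsplit : ∀ (k : ℕ) (x : ℝ), iteratedDeriv k (fun t => p (t ^ 2) + t * q (t ^ 2)) x
      = iteratedDeriv k (fun t => p (t ^ 2)) x + iteratedDeriv k (fun t => t * q (t ^ 2)) x :=
    fun k x => my_iterDeriv_add hpsq (contDiff_id.mul hqsq) k x
  have hzero : iteratedDeriv (2 * n) (fun t : ℝ => t * q (t ^ 2)) 0 = 0 := by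
    cases n with
    | zero => norm_num [iteratedDeriv_zero]
    | succ m =>
      rw [show 2 * (m + 1) = (2 * m + 1) + 1 from by ring,
        my_id_mul hqsq (2 * m + 1) 0, (my_sq_lemma m q hq).2]
      simp
  have heven : iteratedDeriv (2 * n) d1 1
      = (((2 * n).factorial : ℝ) / (n.factorial : ℝ)) * iteratedDeriv n p 0 := by
    rw [hshift (2 * n), hsplit (2 * n) 0, (my_sq_lemma n p hp).1, hzero, add_zero]
  have hodd : iteratedDeriv (2 * n + 1) d1 1
      = ((2 * n : ℝ) + 1) * ((((2 * n).factorial : ℝ) / (n.factorial : ℝ)) * iteratedDeriv n q 0) := by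
    rw [hshift (2 * n + 1), hsplit (2 * n + 1) 0, (my_sq_lemma n p hp).2,
      my_id_mul hqsq (2 * n) 0, (my_sq_lemma n q hq).1]
    push_cast
    ring
  have hneg : iteratedDeriv n (fun u : ℝ => g (1 - u)) 0 = (-1:ℝ) ^ n * iteratedDeriv n g 1 := by
    have h1 := iteratedDeriv_comp_neg n (fun v : ℝ => g (1 + v)) 0
    have h2 : (fun x : ℝ => (fun v : ℝ => g (1 + v)) (-x)) = fun u : ℝ => g (1 - u) := by
      funext x
      simp [sub_eq_add_neg]
    rw [h2] at h1
    rw [h1, iteratedDeriv_comp_const_add n g 1]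
    norm_num [smul_eq_mul]
  have hpq : iteratedDeriv n p 0 = (-1:ℝ) ^ n * iteratedDeriv n g 1 + iteratedDeriv n q 0 := by
    have h1 : iteratedDeriv n p 0
        = iteratedDeriv n (fun u : ℝ => g (1 - u)) 0 + iteratedDeriv n q 0 :=
      my_iterDeriv_add hgcomp hq n 0
    rw [h1, hneg]
  rw [heven, hodd, hpq]
  have hn : (n.factorial : ℝ) ≠ 0 := by exact_mod_cast n.factorial_ne_zero
  have h2n : (((2 * n).factorial : ℝ)) ≠ 0 := by exact_mod_cast (2 * n).factorial_ne_zero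
  have hfe : ((2 * n + 1).factorial : ℝ) = (((2 * n : ℕ) : ℝ) + 1) * ((2 * n).factorial : ℝ) := by
    rw [Nat.factorial_succ]
    push_cast
    ring
  rw [hfe]
  have h2n1 : ((2 * n : ℕ) : ℝ) + 1 ≠ 0 := by positivity
  push_cast
  field_simp
  ring
end

section
/- Let q, p, u, v : ℝ → ℝ be differentiable functions satisfying, for every s ∈ ℝ: q′(s) = p(s) − q(s)·u(s), u′(s) = −q(s)², and v′(s) = −p(s)·q(s). Then the function s ↦ u(s)² − 2·v(s) − q(s)² is constant. In particular, if u(s)² − 2v(s) − q(s)² tends to 0 as s → ∞, then u(s)² − 2v(s) = q(s)² for all s. -/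
/-! Along the system, `(u² − 2v − q²)' = −2uq² + 2pq − 2q(p − qu) = 0`, so the quantity is
constant, and a constant with limit `0` at `+∞` is `0`. -/

open Filter

def firstIntegral (q u v : ℝ → ℝ) (s : ℝ) : ℝ := u s ^ 2 - 2 * v s - q s ^ 2

theorem hasDerivAt_firstIntegral {q u v : ℝ → ℝ} {p s : ℝ}
    (hq : HasDerivAt q (p - q s * u s) s) (hu : HasDerivAt u (-q s ^ 2) s)
    (hv : HasDerivAt v (-(p * q s)) s) :
    HasDerivAt (firstIntegral q u v) 0 s := by
  have h := ((hu.fun_pow 2).fun_sub (hv.const_mul 2)).fun_sub (hq.fun_pow 2)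
  exact h.congr_deriv (by push_cast; ring)

theorem firstIntegral_const {q p u v : ℝ → ℝ}
    (hq : Differentiable ℝ q) (hu : Differentiable ℝ u) (hv : Differentiable ℝ v)
    (hq' : ∀ s, deriv q s = p s - q s * u s) (hu' : ∀ s, deriv u s = -q s ^ 2)
    (hv' : ∀ s, deriv v s = -(p s * q s)) (x y : ℝ) :
    firstIntegral q u v x = firstIntegral q u v y := by
  have hF : ∀ s, HasDerivAt (firstIntegral q u v) 0 s := fun s =>
    hasDerivAt_firstIntegral (hq' s ▸ (hq s).hasDerivAt) (hu' s ▸ (hu s).hasDerivAt)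
      (hv' s ▸ (hv s).hasDerivAt)
  exact is_const_of_deriv_eq_zero (fun s => (hF s).differentiableAt)
    (fun s => (hF s).deriv) x y

theorem first_integral_general (q p u v : ℝ → ℝ)
    (hq : Differentiable ℝ q)
    (hu : Differentiable ℝ u) (hv : Differentiable ℝ v)
    (hq' : ∀ s : ℝ, deriv q s = p s - q s * u s)
    (hu' : ∀ s : ℝ, deriv u s = -(q s) ^ 2)
    (hv' : ∀ s : ℝ, deriv v s = -(p s * q s)) :
    (∃ c : ℝ, ∀ s : ℝ, u s ^ 2 - 2 * v s - q s ^ 2 = c) ∧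
    (Tendsto (fun s : ℝ => u s ^ 2 - 2 * v s - q s ^ 2) atTop (nhds 0) →
      ∀ s : ℝ, u s ^ 2 - 2 * v s = q s ^ 2) := by
  have hconst := firstIntegral_const hq hu hv hq' hu' hv'
  refine ⟨⟨firstIntegral q u v 0, fun s => hconst s 0⟩, fun hlim s => ?_⟩
  have hF : firstIntegral q u v = fun _ => firstIntegral q u v s := funext (hconst · s)
  have hzero : firstIntegral q u v s = 0 := by
    rw [← tendsto_const_nhds_iff (l := (atTop : Filter ℝ)), ← hF]
    exact hlim
  rw [firstIntegral] at hzero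
  linarith

/-- First integral of the coupled system in the Painlevé II derivation:
`u² − 2v − q²` is constant, and if it tends to `0` at `+∞` then `u² − 2v = q²`. -/
theorem first_integral (q p u v : ℝ → ℝ)
    (hq : Differentiable ℝ q) (hp : Differentiable ℝ p)
    (hu : Differentiable ℝ u) (hv : Differentiable ℝ v)
    (hq' : ∀ s : ℝ, deriv q s = p s - q s * u s)
    (hu' : ∀ s : ℝ, deriv u s = -(q s) ^ 2)
    (hv' : ∀ s : ℝ, deriv v s = -(p s * q s)) :
    (∃ c : ℝ, ∀ s : ℝ, u s ^ 2 - 2 * v s - q s ^ 2 = c) ∧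
    (Tendsto (fun s : ℝ => u s ^ 2 - 2 * v s - q s ^ 2) atTop (nhds 0) →
      ∀ s : ℝ, u s ^ 2 - 2 * v s = q s ^ 2) :=
  first_integral_general q p u v hq hu hv hq' hu' hv'
end

section
/- Let q, p, u, v : ℝ → ℝ be functions with q twice differentiable and p, u, v differentiable, satisfying for every s ∈ ℝ: q′(s) = p(s) − q(s)·u(s), p′(s) = s·q(s) − 2·q(s)·v(s) + p(s)·u(s), u′(s) = −q(s)², v′(s) = −p(s)·q(s), and u(s)² − 2·v(s) = q(s)². Then q satisfies the Painlevé II equation: q″(s) = s·q(s) + 2·q(s)³ for all s ∈ ℝ. -/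
theorem deriv_deriv_of_deriv_eq_sub_mul {𝕜 : Type*} [NontriviallyNormedField 𝕜]
    {q p u : 𝕜 → 𝕜} {s : 𝕜} (hq : DifferentiableAt 𝕜 q s) (hp : DifferentiableAt 𝕜 p s)
    (hu : DifferentiableAt 𝕜 u s) (hqd : ∀ x, deriv q x = p x - q x * u x) :
    deriv (deriv q) s = deriv p s - (deriv q s * u s + q s * deriv u s) := by
  rw [funext hqd, deriv_fun_sub hp (hq.fun_mul hu), deriv_fun_mul hq hu, hqd]

/- Differentiating `q' = p - qu` once and inserting the system gives
`q'' = sq + q (u² - 2v) + q³`; the first integral turns the middle term into `q³`. -/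
theorem painleve_II_from_system_general (q p u v : ℝ → ℝ)
    (hq : Differentiable ℝ q)
    (hp : Differentiable ℝ p) (hu : Differentiable ℝ u)
    (hqd : ∀ s : ℝ, deriv q s = p s - q s * u s)
    (hpd : ∀ s : ℝ, deriv p s = s * q s - 2 * q s * v s + p s * u s)
    (hud : ∀ s : ℝ, deriv u s = -(q s) ^ 2)
    (hfirst : ∀ s : ℝ, u s ^ 2 - 2 * v s = q s ^ 2) :
    ∀ s : ℝ, deriv (deriv q) s = s * q s + 2 * (q s) ^ 3 := by
  intro s
  rw [deriv_deriv_of_deriv_eq_sub_mul (hq s) (hp s) (hu s) hqd, hpd, hud, hqd]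
  linear_combination q s * hfirst s

/-- Derivation of the Painlevé II equation `q″ = s·q + 2q³` from the first-order system
and the first integral `u² − 2v = q²`. -/
theorem painleve_II_from_system (q p u v : ℝ → ℝ)
    (hq : Differentiable ℝ q) (hq' : Differentiable ℝ (deriv q))
    (hp : Differentiable ℝ p) (hu : Differentiable ℝ u) (hv : Differentiable ℝ v)
    (hqd : ∀ s : ℝ, deriv q s = p s - q s * u s)
    (hpd : ∀ s : ℝ, deriv p s = s * q s - 2 * q s * v s + p s * u s)
    (hud : ∀ s : ℝ, deriv u s = -(q s) ^ 2)
    (hvd : ∀ s : ℝ, deriv v s = -(p s * q s))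
    (hfirst : ∀ s : ℝ, u s ^ 2 - 2 * v s = q s ^ 2) :
    ∀ s : ℝ, deriv (deriv q) s = s * q s + 2 * (q s) ^ 3 :=
  painleve_II_from_system_general q p u v hq hp hu hqd hpd hud hfirst
end

section
/- Let λ ≥ 0 and μ be real numbers, and define: ū = (1/2)·(1 − (1/2)e^{μ} − (1/2)e^{−μ}), q̄ = (1/(2√2))·(e^{−μ} − e^{μ}), 𝒫̄₄ = (1/(2√2))·( ((2−√λ)/2)e^{μ} − ((2+√λ)/2)e^{−μ} − √λ ), and ℛ̄₄ = ((2−√λ)/4)e^{μ} + ((2+√λ)/4)e^{−μ} − 1. Then the determinant of the 2×2 matrix with rows (1 − ū, −q̄) and ((1/2)𝒫̄₄, 1 + (1/2)ℛ̄₄) equals cosh²(μ/2); explicitly, (1 − ū)·(1 + (1/2)ℛ̄₄) + q̄·(1/2)𝒫̄₄ = cosh²(μ/2). In particular the λ-dependent terms cancel and the result is independent of λ. -/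
/-- Substituting the explicit solutions `ū, q̄, 𝒫̄₄, ℛ̄₄` of the `β = 4` edge-scaling
systems into the `2×2` perturbation determinant yields `cosh²(μ/2)`, independently
of `λ`. -/
theorem gse_perturbation_determinant (lam mu : ℝ) (hlam : 0 ≤ lam) :
    let ubar : ℝ := (1 / 2) * (1 - (1 / 2) * Real.exp mu - (1 / 2) * Real.exp (-mu))
    let qbar : ℝ := (1 / (2 * Real.sqrt 2)) * (Real.exp (-mu) - Real.exp mu)
    let Pbar : ℝ := (1 / (2 * Real.sqrt 2)) *
      (((2 - Real.sqrt lam) / 2) * Real.exp mu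
        - ((2 + Real.sqrt lam) / 2) * Real.exp (-mu) - Real.sqrt lam)
    let Rbar : ℝ := ((2 - Real.sqrt lam) / 4) * Real.exp mu
      + ((2 + Real.sqrt lam) / 4) * Real.exp (-mu) - 1
    Matrix.det !![1 - ubar, -qbar; (1 / 2) * Pbar, 1 + (1 / 2) * Rbar]
        = Real.cosh (mu / 2) ^ 2 ∧
      (1 - ubar) * (1 + (1 / 2) * Rbar) + qbar * ((1 / 2) * Pbar)
        = Real.cosh (mu / 2) ^ 2 := by
  intro ubar qbar Pbar Rbar
  have hEpos := Real.exp_pos mu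
  have hE : Real.exp (-mu) = (Real.exp mu)⁻¹ := Real.exp_neg mu
  have hs2 : Real.sqrt 2 * Real.sqrt 2 = 2 := Real.mul_self_sqrt (by norm_num)
  have hs2ne : Real.sqrt 2 ≠ 0 := by positivity
  have ha : Real.exp (mu/2) * Real.exp (mu/2) = Real.exp mu := by
    rw [← Real.exp_add]; ring_nf
  have hcosh : Real.cosh (mu/2) ^ 2 = (Real.exp mu + (Real.exp mu)⁻¹ + 2) / 4 := by
    rw [Real.cosh_eq, Real.exp_neg]
    have hane : Real.exp (mu/2) ≠ 0 := (Real.exp_pos _).ne'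
    have ha2 : Real.exp (mu/2) ^ 2 = Real.exp mu := by rw [sq]; exact ha
    field_simp
    linear_combination (4 * Real.exp (mu/2) ^ 2 * Real.exp mu - 4) * ha2
  have key : (1 - ubar) * (1 + (1 / 2) * Rbar) + qbar * ((1 / 2) * Pbar)
      = Real.cosh (mu / 2) ^ 2 := by
    simp only [ubar, qbar, Pbar, Rbar, hcosh, hE]
    have hs2' : Real.sqrt 2 ^ 2 = 2 := by rw [sq]; exact hs2
    field_simp
    ring_nf
    rw [hs2']
    ring
  exact ⟨by rw [Matrix.det_fin_two_of]; linarith [key], key⟩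
end
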